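/- arXiv:2501.11753 — 3 statements merged into one kernel-verified Lean document; each statement's English description precedes it below -/
import Mathlib

section
/- Define φ(x, u) := g(ℓx/u)·1[βℓx > u] and V(u) := max over Ĥ ∈ MPC(F) of k ∫ φ(x, u) dĤ(x). Then the maximum defining V(u) is attained for every u > 0, V is continuous and weakly decreasing on (0,∞), V(u) = 0 for all u ≥ βℓ, lim_{u→0+} V(u) = ∞, and there exists a unique ū ∈ (0, βℓ) with V(ū) = 1. -/
open MeasureTheory Set Filter Topology ProbabilityTheory

noncomputable section

/-- The type space `Θ = [0,1]` of seller types. -/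
abbrev Θ : Type := Set.Icc (0:ℝ) 1

/-- The space of Borel probability measures on `[0,1]`, with the weak topology. -/
abbrev PM : Type := MeasureTheory.ProbabilityMeasure Θ

/-- Borel σ-algebra on the space of probability measures on `[0,1]`. -/
instance : MeasurableSpace PM := borel PM

/-- Expected seller type of a submarket `ν`: `E_ν[θ]`. -/
def Eθ (ν : PM) : ℝ := ∫ θ, (θ : ℝ) ∂(ν : Measure Θ)

/-- A meeting function: `m 0 = 0`, `m t ≤ min 1 t`, twice differentiable, strictly increasing
and strictly concave, with `β = lim_{t→0+} m t / t ∈ (0,1]` and `α = lim_{t→∞} m t ∈ (0,1]`. -/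
structure MeetingFunction where
  m : ℝ → ℝ
  β : ℝ
  α : ℝ
  m_zero : m 0 = 0
  m_le : ∀ t ≥ (0:ℝ), m t ≤ min 1 t
  diff1 : ∀ t > (0:ℝ), DifferentiableAt ℝ m t
  diff2 : ∀ t > (0:ℝ), DifferentiableAt ℝ (deriv m) t
  mono : StrictMonoOn m (Ici 0)
  concave : StrictConcaveOn ℝ (Ici 0) m
  β_mem : β ∈ Ioc (0:ℝ) 1
  α_mem : α ∈ Ioc (0:ℝ) 1
  β_lim : Tendsto (fun t => m t / t) (nhdsWithin 0 (Ioi 0)) (nhds β)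
  α_lim : Tendsto m atTop (nhds α)

/-- `MPC μF`: the probability measures on `[0,1]` dominated by `μF` in the convex order,
i.e. the mean-preserving contractions of (the CDF of) `μF`. -/
def MPC (μF : Measure ℝ) : Set (Measure ℝ) :=
  {H | IsProbabilityMeasure H ∧ H (Icc (0:ℝ) 1)ᶜ = 0 ∧
    ∀ c : ℝ → ℝ, ConvexOn ℝ (Icc 0 1) c → ContinuousOn c (Icc 0 1) →
      ∫ x, c x ∂H ≤ ∫ x, c x ∂μF}

/-- Equilibrium tightness in the submarket with posterior mean `x` at reservation value `u`:
`g(ℓx/u) · 1[βℓx > u]`. -/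
def tstar (M : MeetingFunction) (g : ℝ → ℝ) (l u x : ℝ) : ℝ :=
  if M.β * l * x > u then g (l * x / u) else 0

namespace Stmt12Aux

/-- CDF of a measure. -/
def mcdf (H : Measure ℝ) (t : ℝ) : ℝ := (H (Iic t)).toReal

lemma icc_one (H : Measure ℝ) [IsProbabilityMeasure H] (hs : H (Icc (0:ℝ) 1)ᶜ = 0) :
    H (Icc (0:ℝ) 1) = 1 := by
  have h := measure_add_measure_compl (μ := H) (measurableSet_Icc (a := (0:ℝ)) (b := 1))
  rw [hs, add_zero, measure_univ] at h; exact h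

lemma ae_mem_Icc (H : Measure ℝ) (hs : H (Icc (0:ℝ) 1)ᶜ = 0) : ∀ᵐ x ∂H, x ∈ Icc (0:ℝ) 1 := by
  rw [ae_iff]
  have : {x : ℝ | ¬ x ∈ Icc (0:ℝ) 1} = (Icc (0:ℝ) 1)ᶜ := rfl
  rw [this]; exact hs

lemma mcdf_nonneg (H : Measure ℝ) (t : ℝ) : 0 ≤ mcdf H t := ENNReal.toReal_nonneg

lemma mcdf_le_one (H : Measure ℝ) [IsProbabilityMeasure H] (t : ℝ) : mcdf H t ≤ 1 := by
  have h : H (Iic t) ≤ 1 := prob_le_one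
  have := ENNReal.toReal_mono (by simp) h
  simpa [mcdf] using this

lemma mcdf_mono (H : Measure ℝ) [IsFiniteMeasure H] : Monotone (mcdf H) := fun a b hab =>
  ENNReal.toReal_mono (measure_ne_top H _) (measure_mono (Iic_subset_Iic.2 hab))

lemma mcdf_eq_zero (H : Measure ℝ) (hs : H (Icc (0:ℝ) 1)ᶜ = 0) {t : ℝ} (ht : t < 0) :
    mcdf H t = 0 := by
  have : H (Iic t) = 0 := measure_mono_null (fun x hx => by
    simp only [mem_compl_iff, mem_Icc, not_and_or, not_le]
    exact Or.inl (lt_of_le_of_lt hx ht)) hs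
  simp [mcdf, this]

lemma mcdf_eq_one (H : Measure ℝ) [IsProbabilityMeasure H] (hs : H (Icc (0:ℝ) 1)ᶜ = 0)
    {t : ℝ} (ht : 1 ≤ t) : mcdf H t = 1 := by
  refine le_antisymm (mcdf_le_one H t) ?_
  have h1 : H (Icc (0:ℝ) 1) ≤ H (Iic t) := measure_mono (fun x hx => le_trans hx.2 ht)
  rw [icc_one H hs] at h1
  have := ENNReal.toReal_mono (measure_ne_top H _) h1
  simpa [mcdf] using this

lemma measure_Ioc_toReal (H : Measure ℝ) [IsFiniteMeasure H] {a b : ℝ} (hab : a ≤ b) :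
    (H (Ioc a b)).toReal = mcdf H b - mcdf H a := by
  rw [← Iic_sdiff_Iic, measure_diff (Iic_subset_Iic.2 hab) measurableSet_Iic.nullMeasurableSet
      (measure_ne_top H _), ENNReal.toReal_sub_of_le (measure_mono (Iic_subset_Iic.2 hab))
      (measure_ne_top H _)]
  rfl

lemma integrable_of_icc_bound (H : Measure ℝ) [IsProbabilityMeasure H]
    (hs : H (Icc (0:ℝ) 1)ᶜ = 0) {f : ℝ → ℝ} (hf : AEStronglyMeasurable f H) {C : ℝ}
    (hC : ∀ x ∈ Icc (0:ℝ) 1, ‖f x‖ ≤ C) : Integrable f H :=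
  (integrable_const C).mono' hf ((ae_mem_Icc H hs).mono fun x hx => hC x hx)

lemma mono_aux (a : ℕ → ℝ) (N : ℕ) (hm : ∀ i < N, a i < a (i + 1)) :
    ∀ i j, i ≤ j → j ≤ N → a i ≤ a j := by
  have key : ∀ d i, i + d ≤ N → a i ≤ a (i + d) := by
    intro d
    induction d with
    | zero => intro i _; simp
    | succ n ih =>
      intro i h
      have h1 : a i ≤ a (i + n) := ih i (by omega)
      have h2 : a (i + n) < a (i + n + 1) := hm (i + n) (by omega)
      have : i + (n + 1) = i + n + 1 := rfl
      rw [this]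
      exact h1.trans h2.le
  intro i j hij hjN
  have := key (j - i) i (by omega)
  rwa [Nat.add_sub_cancel' hij] at this

lemma iUnion_Ioc_aux (a : ℕ → ℝ) : ∀ N, (∀ i < N, a i < a (i + 1)) →
    (⋃ i ∈ Finset.range N, Ioc (a i) (a (i + 1))) = Ioc (a 0) (a N) := by
  intro N
  induction N with
  | zero => intro _; simp
  | succ n ih =>
    intro hm
    have h0n : a 0 ≤ a n := mono_aux a (n + 1) hm 0 n (Nat.zero_le _) (by omega)
    have hnn : a n ≤ a (n + 1) := (hm n (by omega)).le
    rw [Finset.range_add_one]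
    rw [Finset.set_biUnion_insert, ih (fun i hi => hm i (by omega)), Set.union_comm,
      Set.Ioc_union_Ioc_eq_Ioc h0n hnn]

/-- Riemann-sum approximation of an integral against a probability measure on `[0,1]`. -/
lemma riemann (H : Measure ℝ) [IsProbabilityMeasure H] (hs : H (Icc (0:ℝ) 1)ᶜ = 0)
    {f : ℝ → ℝ} (hf : Continuous f) {ε : ℝ} (hε : 0 ≤ ε)
    (a : ℕ → ℝ) (N : ℕ) (hm : ∀ i < N, a i < a (i + 1)) (ha0 : a 0 < 0) (haN : 1 ≤ a N)
    (hosc : ∀ i < N, ∀ x ∈ Icc (a i) (a (i + 1)), |f x - f (a (i + 1))| ≤ ε) :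
    |(∫ x, f x ∂H) - ∑ i ∈ Finset.range N, f (a (i + 1)) * (mcdf H (a (i + 1)) - mcdf H (a i))|
      ≤ ε := by
  obtain ⟨C, hC⟩ := IsCompact.exists_bound_of_continuousOn isCompact_Icc
    (hf.continuousOn : ContinuousOn f (Icc (0:ℝ) 1))
  have hfi : Integrable f H := integrable_of_icc_bound H hs hf.aestronglyMeasurable hC
  have hsub : Icc (0:ℝ) 1 ⊆ Ioc (a 0) (a N) := fun x hx =>
    ⟨lt_of_lt_of_le ha0 hx.1, hx.2.trans haN⟩
  have hres : H.restrict (Ioc (a 0) (a N)) = H :=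
    Measure.restrict_eq_self_of_ae_mem ((ae_mem_Icc H hs).mono fun x hx => hsub hx)
  have hdisj : (↑(Finset.range N) : Set ℕ).Pairwise
      (Function.onFun Disjoint fun i => Ioc (a i) (a (i + 1))) := by
    intro i hi j hj hij
    simp only [Finset.coe_range, mem_Iio] at hi hj
    rcases lt_or_gt_of_ne hij with h | h
    · refine Set.Ioc_disjoint_Ioc.2 ?_
      have : a (i + 1) ≤ a j := mono_aux a N (fun i hi => hm i hi) (i + 1) j h hj.le
      exact le_trans (min_le_left _ _) (this.trans (le_max_right _ _))
    · refine Set.Ioc_disjoint_Ioc.2 ?_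
      have : a (j + 1) ≤ a i := mono_aux a N (fun i hi => hm i hi) (j + 1) i h hi.le
      exact le_trans (min_le_right _ _) (this.trans (le_max_left _ _))
  have hsplit : (∫ x, f x ∂H) =
      ∑ i ∈ Finset.range N, ∫ x in Ioc (a i) (a (i + 1)), f x ∂H := by
    conv_lhs => rw [← hres]
    rw [← integral_biUnion_finset (Finset.range N) (fun i _ => measurableSet_Ioc) hdisj
      (fun i _ => hfi.integrableOn)]
    rw [iUnion_Ioc_aux a N hm]
  have hpiece : ∀ i < N,
      |(∫ x in Ioc (a i) (a (i + 1)), f x ∂H) -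
        f (a (i + 1)) * (mcdf H (a (i + 1)) - mcdf H (a i))|
      ≤ ε * (H (Ioc (a i) (a (i + 1)))).toReal := by
    intro i hi
    have hconst : f (a (i + 1)) * (mcdf H (a (i + 1)) - mcdf H (a i)) =
        ∫ _ in Ioc (a i) (a (i + 1)), f (a (i + 1)) ∂H := by
      rw [setIntegral_const, measureReal_def, measure_Ioc_toReal H (hm i hi).le, smul_eq_mul, mul_comm]
    rw [hconst, ← integral_sub hfi.integrableOn (integrableOn_const (measure_lt_top H _).ne)]
    have := norm_setIntegral_le_of_norm_le_const (μ := H) (s := Ioc (a i) (a (i + 1)))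
      (f := fun x => f x - f (a (i + 1))) (C := ε) (measure_lt_top H _)
      (fun x hx => by rw [Real.norm_eq_abs]; exact hosc i hi x (Ioc_subset_Icc_self hx))
    simpa [Real.norm_eq_abs, measureReal_def] using this
  have htel : ∑ i ∈ Finset.range N, (H (Ioc (a i) (a (i + 1)))).toReal = 1 := by
    have : ∀ i ∈ Finset.range N, (H (Ioc (a i) (a (i + 1)))).toReal =
        mcdf H (a (i + 1)) - mcdf H (a i) := fun i hi =>
      measure_Ioc_toReal H (hm i (Finset.mem_range.1 hi)).le
    rw [Finset.sum_congr rfl this, Finset.sum_range_sub (fun i => mcdf H (a i)),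
      mcdf_eq_one H hs haN, mcdf_eq_zero H hs ha0]
    ring
  calc |(∫ x, f x ∂H) - ∑ i ∈ Finset.range N, f (a (i + 1)) * (mcdf H (a (i + 1)) - mcdf H (a i))|
      = |∑ i ∈ Finset.range N, ((∫ x in Ioc (a i) (a (i + 1)), f x ∂H) -
          f (a (i + 1)) * (mcdf H (a (i + 1)) - mcdf H (a i)))| := by
        rw [Finset.sum_sub_distrib, ← hsplit]
    _ ≤ ∑ i ∈ Finset.range N, |(∫ x in Ioc (a i) (a (i + 1)), f x ∂H) -
          f (a (i + 1)) * (mcdf H (a (i + 1)) - mcdf H (a i))| := Finset.abs_sum_le_sum_abs _ _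
    _ ≤ ∑ i ∈ Finset.range N, ε * (H (Ioc (a i) (a (i + 1)))).toReal := by
        refine Finset.sum_le_sum fun i hi => hpiece i (Finset.mem_range.1 hi)
    _ = ε * ∑ i ∈ Finset.range N, (H (Ioc (a i) (a (i + 1)))).toReal := by
        rw [Finset.mul_sum]
    _ = ε := by rw [htel, mul_one]

end Stmt12Aux

namespace Stmt12Aux

lemma helly_bray (H : Measure ℝ) [IsProbabilityMeasure H] (hs : H (Icc (0:ℝ) 1)ᶜ = 0)
    (Hs : ℕ → Measure ℝ) (hp : ∀ n, IsProbabilityMeasure (Hs n))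
    (hss : ∀ n, Hs n (Icc (0:ℝ) 1)ᶜ = 0)
    (D : Set ℝ) (hD : Dense D)
    (hconv : ∀ t ∈ D, Tendsto (fun n => mcdf (Hs n) t) atTop (𝓝 (mcdf H t)))
    {f : ℝ → ℝ} (hf : Continuous f) :
    Tendsto (fun n => ∫ x, f x ∂(Hs n)) atTop (𝓝 (∫ x, f x ∂H)) := by
  rw [Metric.tendsto_atTop]
  intro ε hε
  obtain ⟨δ₀, hδ₀, hδ₀'⟩ := (Metric.uniformContinuousOn_iff.1
    (isCompact_Icc.uniformContinuousOn_of_continuous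
      (hf.continuousOn : ContinuousOn f (Icc (-1:ℝ) 3)))) (ε/4) (by linarith)
  set δ : ℝ := min (δ₀/2) (1/2) with hδdef
  have hδpos : 0 < δ := lt_min (by linarith) (by norm_num)
  have hδle : δ ≤ 1/2 := min_le_right _ _
  have hδle' : 3 * δ / 2 < δ₀ := by
    have : δ ≤ δ₀/2 := min_le_left _ _
    linarith
  have hpick : ∀ i : ℕ, ∃ x, x ∈ D ∧ x ∈ Ioo ((i:ℝ)*δ - 1) ((i:ℝ)*δ - 1 + δ/2) := by
    intro i
    have hne : ((i:ℝ)*δ - 1) < (i:ℝ)*δ - 1 + δ/2 := by linarith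
    obtain ⟨x, hxD, hx⟩ := hD.exists_mem_open isOpen_Ioo (nonempty_Ioo.2 hne)
    exact ⟨x, hxD, hx⟩
  choose a haD haI using hpick
  set N : ℕ := ⌈(2:ℝ)/δ⌉₊ with hNdef
  have hNδ : 2 ≤ (N:ℝ) * δ := by
    have h := Nat.le_ceil ((2:ℝ)/δ)
    calc (2:ℝ) = (2/δ) * δ := by field_simp
    _ ≤ (N:ℝ) * δ := mul_le_mul_of_nonneg_right h hδpos.le
  have hNδ' : (N:ℝ) * δ < 2 + δ := by
    have h : (N:ℝ) < 2/δ + 1 := by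
      exact_mod_cast Nat.ceil_lt_add_one (by positivity : (0:ℝ) ≤ 2/δ)
    have h2 : (2/δ + 1) * δ = 2 + δ := by field_simp
    nlinarith
  have hm : ∀ i < N, a i < a (i+1) := by
    intro i _
    have h1 := (haI i).2
    have h2 := (haI (i+1)).1
    push_cast at h2
    linarith
  have ha0 : a 0 < 0 := by
    have := (haI 0).2; push_cast at this; linarith
  have haN : 1 ≤ a N := by
    have := (haI N).1; linarith
  have hrange : ∀ i ≤ N, a i ∈ Icc (-1:ℝ) 3 := by
    intro i hi
    have h1 := (haI i).1
    have h2 := (haI i).2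
    have hi' : (i:ℝ) * δ ≤ (N:ℝ)*δ := by
      have : (i:ℝ) ≤ N := by exact_mod_cast hi
      nlinarith
    constructor
    · nlinarith [mul_nonneg (Nat.cast_nonneg i : (0:ℝ) ≤ i) hδpos.le]
    · nlinarith
  have hosc : ∀ i < N, ∀ x ∈ Icc (a i) (a (i+1)), |f x - f (a (i+1))| ≤ ε/4 := by
    intro i hi x hx
    have hai := hrange i hi.le
    have hai1 := hrange (i+1) hi
    have hxm : x ∈ Icc (-1:ℝ) 3 := ⟨hai.1.trans hx.1, hx.2.trans hai1.2⟩
    have hgap : a (i+1) - a i < 3*δ/2 := by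
      have h1 := (haI i).1
      have h2 := (haI (i+1)).2
      push_cast at h2
      linarith
    have hdist : dist x (a (i+1)) < δ₀ := by
      rw [Real.dist_eq, abs_sub_lt_iff]
      exact ⟨by linarith [hx.2], by linarith [hx.1]⟩
    have := hδ₀' x hxm (a (i+1)) hai1 hdist
    rw [Real.dist_eq] at this
    linarith
  have hH := riemann H hs hf (by linarith : (0:ℝ) ≤ ε/4) a N hm ha0 haN hosc
  have hHn : ∀ n, |(∫ x, f x ∂(Hs n)) - ∑ i ∈ Finset.range N,
      f (a (i+1)) * (mcdf (Hs n) (a (i+1)) - mcdf (Hs n) (a i))| ≤ ε/4 := fun n =>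
    haveI := hp n
    riemann (Hs n) (hss n) hf (by linarith : (0:ℝ) ≤ ε/4) a N hm ha0 haN hosc
  have hsum : Tendsto (fun n => ∑ i ∈ Finset.range N,
      f (a (i+1)) * (mcdf (Hs n) (a (i+1)) - mcdf (Hs n) (a i))) atTop
      (𝓝 (∑ i ∈ Finset.range N, f (a (i+1)) * (mcdf H (a (i+1)) - mcdf H (a i)))) := by
    refine tendsto_finset_sum _ fun i _ => ?_
    exact ((hconv _ (haD (i+1))).sub (hconv _ (haD i))).const_mul _
  obtain ⟨N₀, hN₀⟩ := (Metric.tendsto_atTop.1 hsum) (ε/4) (by linarith)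
  refine ⟨N₀, fun n hn => ?_⟩
  have t1 := hHn n
  have t2 := hN₀ n hn
  rw [Real.dist_eq] at t2 ⊢
  have A := abs_sub_le (∫ x, f x ∂(Hs n))
    (∑ i ∈ Finset.range N, f (a (i+1)) * (mcdf (Hs n) (a (i+1)) - mcdf (Hs n) (a i)))
    (∫ x, f x ∂H)
  have B := abs_sub_le
    (∑ i ∈ Finset.range N, f (a (i+1)) * (mcdf (Hs n) (a (i+1)) - mcdf (Hs n) (a i)))
    (∑ i ∈ Finset.range N, f (a (i+1)) * (mcdf H (a (i+1)) - mcdf H (a i)))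
    (∫ x, f x ∂H)
  have t3 : |(∑ i ∈ Finset.range N, f (a (i+1)) * (mcdf H (a (i+1)) - mcdf H (a i)))
      - ∫ x, f x ∂H| = |(∫ x, f x ∂H) - ∑ i ∈ Finset.range N,
      f (a (i+1)) * (mcdf H (a (i+1)) - mcdf H (a i))| := abs_sub_comm _ _
  rw [t3] at B
  linarith

end Stmt12Aux

namespace Stmt12Aux

lemma helly_selection (Hs : ℕ → Measure ℝ) (hp : ∀ n, IsProbabilityMeasure (Hs n))
    (hss : ∀ n, Hs n (Icc (0:ℝ) 1)ᶜ = 0) :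
    ∃ (H : Measure ℝ) (σ : ℕ → ℕ), StrictMono σ ∧ IsProbabilityMeasure H ∧
      H (Icc (0:ℝ) 1)ᶜ = 0 ∧
      ∀ f : ℝ → ℝ, Continuous f →
        Tendsto (fun j => ∫ x, f x ∂(Hs (σ j))) atTop (𝓝 (∫ x, f x ∂H)) := by
  have hmem : ∀ (n : ℕ) (q : ℚ), mcdf (Hs n) q ∈ Icc (0:ℝ) 1 := fun n q =>
    haveI := hp n; ⟨mcdf_nonneg _ _, mcdf_le_one _ _⟩
  set Fn : ℕ → (ℚ → Icc (0:ℝ) 1) := fun n q => ⟨mcdf (Hs n) q, hmem n q⟩ with hFn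
  obtain ⟨G, σ, hσ, hGlim⟩ := CompactSpace.tendsto_subseq Fn
  have hGlim' : ∀ q : ℚ, Tendsto (fun j => mcdf (Hs (σ j)) q) atTop (𝓝 ((G q : ℝ))) := by
    intro q
    have h := tendsto_pi_nhds.1 hGlim q
    exact (continuous_subtype_val.tendsto (G q)).comp h
  set Gr : ℚ → ℝ := fun q => (G q : ℝ) with hGr
  have hGr0 : ∀ q, 0 ≤ Gr q := fun q => (G q).2.1
  have hGr1 : ∀ q, Gr q ≤ 1 := fun q => (G q).2.2
  have hGrneg : ∀ q : ℚ, (q:ℝ) < 0 → Gr q = 0 := by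
    intro q hq
    refine tendsto_nhds_unique (hGlim' q) ?_
    have h : ∀ j, mcdf (Hs (σ j)) q = 0 := fun j => mcdf_eq_zero _ (hss (σ j)) hq
    simpa [h] using (tendsto_const_nhds : Tendsto (fun _ : ℕ => (0:ℝ)) atTop (𝓝 0))
  have hGrone : ∀ q : ℚ, (1:ℝ) ≤ q → Gr q = 1 := by
    intro q hq
    refine tendsto_nhds_unique (hGlim' q) ?_
    have h : ∀ j, mcdf (Hs (σ j)) q = 1 := fun j =>
      haveI := hp (σ j); mcdf_eq_one _ (hss (σ j)) hq
    simpa [h] using (tendsto_const_nhds : Tendsto (fun _ : ℕ => (1:ℝ)) atTop (𝓝 1))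
  set φ : ℝ → ℝ := fun t => sInf (Gr '' {q : ℚ | t < (q:ℝ)}) with hφdef
  have hne : ∀ t : ℝ, (Gr '' {q : ℚ | t < (q:ℝ)}).Nonempty := by
    intro t; obtain ⟨q, hq⟩ := exists_rat_gt t; exact ⟨Gr q, ⟨q, hq, rfl⟩⟩
  have hbdd : ∀ t : ℝ, BddBelow (Gr '' {q : ℚ | t < (q:ℝ)}) := by
    intro t
    refine ⟨0, fun y hy => ?_⟩
    obtain ⟨q, _, rfl⟩ := hy
    exact hGr0 q
  have hφle : ∀ (t : ℝ) (q : ℚ), t < (q:ℝ) → φ t ≤ Gr q := fun t q hq =>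
    csInf_le (hbdd t) ⟨q, hq, rfl⟩
  have hφge : ∀ (t c : ℝ), (∀ q : ℚ, t < (q:ℝ) → c ≤ Gr q) → c ≤ φ t := by
    intro t c h
    refine le_csInf (hne t) fun y hy => ?_
    obtain ⟨q, hq, rfl⟩ := hy
    exact h q hq
  have hφ0 : ∀ t, 0 ≤ φ t := fun t => hφge t 0 (fun q _ => hGr0 q)
  have hφmono : Monotone φ := by
    intro t t' h
    refine le_csInf (hne t') fun y hy => ?_
    obtain ⟨q, hq, rfl⟩ := hy
    exact hφle t q (lt_of_le_of_lt h hq)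
  have hφneg : ∀ t : ℝ, t < 0 → φ t = 0 := by
    intro t ht
    refine le_antisymm ?_ (hφ0 t)
    obtain ⟨q, hq1, hq2⟩ := exists_rat_btwn ht
    rw [← hGrneg q hq2]
    exact hφle t q hq1
  have hφone1 : ∀ t : ℝ, φ t ≤ 1 := by
    intro t
    obtain ⟨q, hq⟩ := exists_rat_gt t
    exact (hφle t q hq).trans (hGr1 q)
  have hφone : ∀ t : ℝ, 1 ≤ t → φ t = 1 := by
    intro t ht
    refine le_antisymm (hφone1 t) (hφge t 1 fun q hq => (hGrone q (ht.trans hq.le)).ge)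
  have hrc : ∀ x : ℝ, ContinuousWithinAt φ (Ici x) x := by
    intro x
    rw [Metric.continuousWithinAt_iff]
    intro ε hε
    have hlt : φ x < φ x + ε/2 := by linarith
    obtain ⟨y, hymem, hy⟩ := exists_lt_of_csInf_lt (hne x) hlt
    obtain ⟨q, hq, rfl⟩ := hymem
    have hq' : x < (q:ℝ) := hq
    refine ⟨(q:ℝ) - x, by linarith, fun y' hy' hdist => ?_⟩
    have h1 : φ x ≤ φ y' := hφmono hy'
    have h2 : y' < (q:ℝ) := by
      rw [Real.dist_eq, abs_sub_lt_iff] at hdist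
      linarith [hdist.1]
    have h3 : φ y' ≤ Gr q := hφle y' q h2
    rw [Real.dist_eq, abs_sub_lt_iff]
    exact ⟨by linarith, by linarith⟩
  set ΦS : StieltjesFunction ℝ := ⟨φ, hφmono, hrc⟩ with hΦS
  have hΦScoe : ∀ t, ΦS t = φ t := fun t => rfl
  have hbot : Tendsto φ atBot (𝓝 0) := by
    have h : ∀ᶠ t in (atBot : Filter ℝ), φ t = 0 :=
      (eventually_lt_atBot (0:ℝ)).mono fun t ht => hφneg t ht
    exact Tendsto.congr' (h.mono fun t ht => ht.symm) tendsto_const_nhds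
  have htop : Tendsto φ atTop (𝓝 1) := by
    have h : ∀ᶠ t in (atTop : Filter ℝ), φ t = 1 :=
      (eventually_ge_atTop (1:ℝ)).mono fun t ht => hφone t ht
    exact Tendsto.congr' (h.mono fun t ht => ht.symm) tendsto_const_nhds
  have hbot' : Tendsto (⇑ΦS) atBot (𝓝 0) := hbot
  have htop' : Tendsto (⇑ΦS) atTop (𝓝 1) := htop
  set H : Measure ℝ := ΦS.measure with hHdef
  have hHIic : ∀ t, H (Iic t) = ENNReal.ofReal (φ t) := by
    intro t
    rw [hHdef, ΦS.measure_Iic hbot' t]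
    norm_num
    rfl
  have hHuniv : H univ = 1 := by
    rw [hHdef, ΦS.measure_univ hbot' htop']
    norm_num
  haveI hHprob : IsProbabilityMeasure H := ⟨hHuniv⟩
  have hmcdfH : ∀ t, mcdf H t = φ t := by
    intro t
    rw [mcdf, hHIic, ENNReal.toReal_ofReal (hφ0 t)]
  have hHsupp : H (Icc (0:ℝ) 1)ᶜ = 0 := by
    have hIcc : (Icc (0:ℝ) 1)ᶜ = Iio 0 ∪ Ioi 1 := by
      ext x
      simp only [mem_compl_iff, mem_Icc, not_and_or, not_le, mem_union, mem_Iio, mem_Ioi]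
    rw [hIcc]
    refine measure_union_null ?_ ?_
    · have hun : (Iio (0:ℝ)) = ⋃ n : ℕ, Iic (-(1/((n:ℝ)+1))) := by
        ext x
        simp only [mem_Iio, mem_iUnion, mem_Iic]
        constructor
        · intro hx
          obtain ⟨n, hn⟩ := exists_nat_one_div_lt (show (0:ℝ) < -x by linarith)
          exact ⟨n, by linarith⟩
        · intro ⟨n, hn⟩
          have h : (0:ℝ) < 1/((n:ℝ)+1) := by positivity
          linarith
      rw [hun]
      refine measure_iUnion_null fun n => ?_
      have hneg : (-(1/((n:ℝ)+1))) < 0 := by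
        have h : (0:ℝ) < 1/((n:ℝ)+1) := by positivity
        linarith
      rw [hHIic, hφneg _ hneg]
      simp
    · rw [← Set.compl_Iic, measure_compl measurableSet_Iic (measure_ne_top H _), hHuniv,
        hHIic, hφone 1 le_rfl]
      simp
  have hcount : {t : ℝ | ¬ ContinuousAt φ t}.Countable := hφmono.countable_not_continuousAt
  have hDense : Dense {t : ℝ | ContinuousAt φ t} := by
    have heq : {t : ℝ | ContinuousAt φ t} = {t : ℝ | ¬ ContinuousAt φ t}ᶜ := by
      ext t; simp
    rw [heq]
    exact hcount.dense_compl ℝ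
  have hconv : ∀ t ∈ {t : ℝ | ContinuousAt φ t},
      Tendsto (fun j => mcdf (Hs (σ j)) t) atTop (𝓝 (mcdf H t)) := by
    intro t hct
    rw [hmcdfH]
    rw [Metric.tendsto_atTop]
    intro ε hε
    obtain ⟨δ₁, hδ₁, hδ₁'⟩ := Metric.continuousAt_iff.1 hct (ε/4) (by linarith)
    have hdist1 : dist (t - δ₁/2) t < δ₁ := by
      rw [Real.dist_eq, abs_sub_lt_iff]
      exact ⟨by linarith, by linarith⟩
    have hs' : φ t - ε/4 < φ (t - δ₁/2) := by
      have h := hδ₁' hdist1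
      rw [Real.dist_eq, abs_sub_lt_iff] at h
      linarith [h.2]
    obtain ⟨q, hq1, hq2⟩ := exists_rat_btwn (show t - δ₁/2 < t by linarith)
    have hGq : φ t - ε/4 < Gr q := lt_of_lt_of_le hs' (hφle _ q hq1)
    obtain ⟨y, hymem, hy⟩ := exists_lt_of_csInf_lt (hne t)
      (show φ t < φ t + ε/4 by linarith)
    obtain ⟨q', hq', rfl⟩ := hymem
    obtain ⟨N₁, hN₁⟩ := (Metric.tendsto_atTop.1 (hGlim' q)) (ε/4) (by linarith)
    obtain ⟨N₂, hN₂⟩ := (Metric.tendsto_atTop.1 (hGlim' q')) (ε/4) (by linarith)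
    refine ⟨max N₁ N₂, fun j hj => ?_⟩
    haveI := hp (σ j)
    have h1 := hN₁ j (le_trans (le_max_left _ _) hj)
    have h2 := hN₂ j (le_trans (le_max_right _ _) hj)
    rw [Real.dist_eq, abs_sub_lt_iff] at h1 h2 ⊢
    have hml : mcdf (Hs (σ j)) q ≤ mcdf (Hs (σ j)) t := mcdf_mono _ hq2.le
    have hmr : mcdf (Hs (σ j)) t ≤ mcdf (Hs (σ j)) q' := mcdf_mono _ hq'.le
    constructor
    · linarith [h2.1]
    · linarith [h1.2]
  exact ⟨H, σ, hσ, hHprob, hHsupp, fun f hf =>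
    helly_bray H hHsupp (fun j => Hs (σ j)) (fun j => hp (σ j)) (fun j => hss (σ j))
      _ hDense hconv hf⟩

end Stmt12Aux


set_option maxHeartbeats 2000000 in
/-- Properties of the value function
`V(u) = max_{Ĥ ∈ MPC(F)} k ∫ g(ℓx/u)·1[βℓx > u] dĤ(x)`: the maximum is attained, `V` is
continuous and weakly decreasing on `(0,∞)`, vanishes above `βℓ`, blows up at `0+`, and there
is a unique `ū ∈ (0, βℓ)` with `V(ū) = 1`. -/
theorem stmt12 (M : MeetingFunction) (g : ℝ → ℝ)
    (hg0 : g (1 / M.β) = 0)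
    (hgmono : StrictMonoOn g (Ici (1 / M.β)))
    (hgcont : ContinuousOn g (Ici (1 / M.β)))
    (hgtop : Tendsto g atTop atTop)
    (hginv : ∀ t > (0:ℝ), g (t / M.m t) = t)
    (k : ℝ) (hk : 0 < k) (l : ℝ) (hl : l ∈ Ioc (0:ℝ) 1)
    (μF : Measure ℝ) [IsProbabilityMeasure μF]
    (hsupp : μF (Icc (0:ℝ) 1)ᶜ = 0) (hac : μF ≪ volume)
    (V : ℝ → ℝ)
    (hV : ∀ u : ℝ, V u = sSup ((fun H => k * ∫ x, tstar M g l u x ∂H) '' MPC μF)) :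
    (∀ u : ℝ, 0 < u → ∃ H ∈ MPC μF,
      (∀ Hhat ∈ MPC μF, k * ∫ x, tstar M g l u x ∂Hhat ≤ k * ∫ x, tstar M g l u x ∂H) ∧
      V u = k * ∫ x, tstar M g l u x ∂H) ∧
    ContinuousOn V (Ioi 0) ∧
    AntitoneOn V (Ioi 0) ∧
    (∀ u : ℝ, M.β * l ≤ u → V u = 0) ∧
    Tendsto V (nhdsWithin 0 (Ioi 0)) atTop ∧
    (∃! u : ℝ, u ∈ Ioo 0 (M.β * l) ∧ V u = 1) := by
  obtain ⟨hβ, hβ1⟩ := M.β_mem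
  obtain ⟨hl0, hl1⟩ := hl
  have hβinv : (0:ℝ) < 1/M.β := by positivity
  set ψ : ℝ → ℝ := fun y => g (max y (1/M.β)) with hψdef
  have hψc : Continuous ψ := ContinuousOn.comp_continuous hgcont
    (continuous_id.max continuous_const) (fun y => mem_Ici.2 (le_max_right _ _))
  have hgm : MonotoneOn g (Ici (1/M.β)) := hgmono.monotoneOn
  have hψm : Monotone ψ := fun y y' h =>
    hgm (mem_Ici.2 (le_max_right _ _)) (mem_Ici.2 (le_max_right _ _)) (max_le_max h le_rfl)
  have hψ0 : ∀ y, 0 ≤ ψ y := fun y => by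
    rw [← hg0]
    exact hgm (mem_Ici.2 le_rfl) (mem_Ici.2 (le_max_right _ _)) (le_max_right _ _)
  have htst : ∀ u : ℝ, 0 < u → (tstar M g l u) = fun x => ψ (l * x / u) := by
    intro u hu
    funext x
    show (if M.β * l * x > u then g (l * x / u) else 0) = g (max (l * x / u) (1/M.β))
    rcases lt_or_ge u (M.β * l * x) with h | h
    · rw [if_pos h]
      have hx : 1/M.β ≤ l*x/u := by
        rw [div_le_div_iff₀ hβ hu]
        nlinarith
      rw [max_eq_left hx]
    · rw [if_neg (not_lt.2 h)]
      have hx : l*x/u ≤ 1/M.β := by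
        rw [div_le_div_iff₀ hu hβ]
        nlinarith
      rw [max_eq_right hx, hg0]
  have hfc : ∀ u : ℝ, 0 < u → Continuous (fun x => ψ (l * x / u)) := fun u hu =>
    hψc.comp ((continuous_const.mul continuous_id).div_const u)
  have hμF : μF ∈ MPC μF := ⟨inferInstance, hsupp, fun c _ _ => le_rfl⟩
  have hbnd : ∀ u : ℝ, 0 < u → ∀ x ∈ Icc (0:ℝ) 1, ‖ψ (l*x/u)‖ ≤ ψ (l/u) := by
    intro u hu x hx
    rw [Real.norm_eq_abs, abs_of_nonneg (hψ0 _)]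
    refine hψm ?_
    rw [div_le_div_iff₀ hu hu]
    nlinarith [mul_nonneg (mul_pos hl0 hu).le (by linarith [hx.2] : (0:ℝ) ≤ 1 - x)]
  have hInt : ∀ (u : ℝ), 0 < u → ∀ (H : Measure ℝ), H ∈ MPC μF →
      Integrable (tstar M g l u) H := by
    intro u hu H hH
    obtain ⟨hH1, hH2, _⟩ := hH
    haveI := hH1
    rw [htst u hu]
    exact Stmt12Aux.integrable_of_icc_bound H hH2 (hfc u hu).aestronglyMeasurable (hbnd u hu)
  have hIb : ∀ u : ℝ, 0 < u → ∀ H ∈ MPC μF, (∫ x, tstar M g l u x ∂H) ≤ ψ (l/u) := by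
    intro u hu H hH
    haveI := hH.1
    have h1 : (tstar M g l u) ≤ᵐ[H] (fun _ => ψ (l/u)) := by
      refine (Stmt12Aux.ae_mem_Icc H hH.2.1).mono (fun x hx => ?_)
      have h := hbnd u hu x hx
      rw [Real.norm_eq_abs, abs_of_nonneg (hψ0 _)] at h
      rw [htst u hu]
      exact h
    have h2 := integral_mono_ae (hInt u hu H hH) (integrable_const _) h1
    simpa using h2
  have hI0 : ∀ u : ℝ, 0 < u → ∀ H ∈ MPC μF, 0 ≤ ∫ x, tstar M g l u x ∂H := by
    intro u hu H hH
    rw [htst u hu]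
    exact integral_nonneg fun x => hψ0 _
  have hAne : ∀ u : ℝ, ((fun H => k * ∫ x, tstar M g l u x ∂H) '' MPC μF).Nonempty :=
    fun u => ⟨_, μF, hμF, rfl⟩
  have hAbdd : ∀ u : ℝ, 0 < u → BddAbove ((fun H => k * ∫ x, tstar M g l u x ∂H) '' MPC μF) := by
    intro u hu
    refine ⟨k * ψ (l/u), fun v hv => ?_⟩
    obtain ⟨H, hH, rfl⟩ := hv
    exact mul_le_mul_of_nonneg_left (hIb u hu H hH) hk.le
  have hVub : ∀ u : ℝ, 0 < u → ∀ H ∈ MPC μF, k * ∫ x, tstar M g l u x ∂H ≤ V u := by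
    intro u hu H hH
    rw [hV]
    exact le_csSup (hAbdd u hu) ⟨H, hH, rfl⟩
  have hVle : ∀ (u : ℝ) (b : ℝ),
      (∀ H ∈ MPC μF, k * ∫ x, tstar M g l u x ∂H ≤ b) → V u ≤ b := by
    intro u b hb
    rw [hV]
    refine csSup_le (hAne u) (fun v hv => ?_)
    obtain ⟨H, hH, rfl⟩ := hv
    exact hb H hH
  have hcomp : ∀ (u u' : ℝ), 0 < u → 0 < u' → ∀ C : ℝ,
      (∀ x ∈ Icc (0:ℝ) 1, ψ (l*x/u') ≤ ψ (l*x/u) + C) → V u' ≤ V u + k * C := by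
    intro u u' hu hu' C hC
    refine hVle u' _ (fun H hH => ?_)
    haveI := hH.1
    have h1 : (tstar M g l u') ≤ᵐ[H] (fun x => tstar M g l u x + C) := by
      refine (Stmt12Aux.ae_mem_Icc H hH.2.1).mono (fun x hx => ?_)
      rw [htst u hu, htst u' hu']
      exact hC x hx
    have h2' := integral_mono_ae (hInt u' hu' H hH) ((hInt u hu H hH).add (integrable_const C)) h1
    have h2 : (∫ x, tstar M g l u' x ∂H) ≤ ∫ x, (tstar M g l u x + C) ∂H := h2'
    rw [integral_add (hInt u hu H hH) (integrable_const C)] at h2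
    have h3 : (∫ _, C ∂H) = C := by simp
    rw [h3] at h2
    have h4 := hVub u hu H hH
    nlinarith [hk.le]
  -- Part 1 : attainment
  have part1 : ∀ u : ℝ, 0 < u → ∃ H ∈ MPC μF,
      (∀ Hhat ∈ MPC μF, k * ∫ x, tstar M g l u x ∂Hhat ≤ k * ∫ x, tstar M g l u x ∂H) ∧
      V u = k * ∫ x, tstar M g l u x ∂H := by
    intro u hu
    obtain ⟨v, hvmono, hvlim, hvmem⟩ := exists_seq_tendsto_sSup (hAne u) (hAbdd u hu)
    choose Hn hHn hveq using hvmem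
    obtain ⟨H, σ, hσ, hHp, hHsupp2, hconv⟩ := Stmt12Aux.helly_selection Hn
      (fun n => (hHn n).1) (fun n => (hHn n).2.1)
    haveI := hHp
    have hHmem : H ∈ MPC μF := by
      refine ⟨hHp, hHsupp2, fun c hcconv hccont => ?_⟩
      set π : ℝ → ℝ := fun x => max 0 (min x 1) with hπ
      have hπc : Continuous π := continuous_const.max (continuous_id.min continuous_const)
      have hπmem : ∀ x, π x ∈ Icc (0:ℝ) 1 := fun x =>
        ⟨le_max_left _ _, max_le (by norm_num) (min_le_right _ _)⟩
      have hπeq : ∀ x ∈ Icc (0:ℝ) 1, π x = x := fun x hx => by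
        show max 0 (min x 1) = x
        rw [min_eq_left hx.2, max_eq_right hx.1]
      have hctc : Continuous (fun x => c (π x)) := hccont.comp_continuous hπc hπmem
      have hcteq : ∀ (H' : Measure ℝ), H' (Icc (0:ℝ) 1)ᶜ = 0 →
          (∫ x, c x ∂H') = ∫ x, c (π x) ∂H' := by
        intro H' hsupp'
        refine integral_congr_ae ((Stmt12Aux.ae_mem_Icc H' hsupp').mono fun x hx => ?_)
        show c x = c (π x)
        rw [hπeq x hx]
      have hlim := hconv (fun x => c (π x)) hctc
      have hle : ∀ j, (∫ x, c (π x) ∂(Hn (σ j))) ≤ ∫ x, c x ∂μF := fun j => by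
        rw [← hcteq (Hn (σ j)) (hHn (σ j)).2.1]
        exact (hHn (σ j)).2.2 c hcconv hccont
      have hfin := le_of_tendsto hlim (Eventually.of_forall hle)
      rwa [hcteq H hHsupp2]
    have hval : Tendsto (fun j => v (σ j)) atTop (𝓝 (k * ∫ x, tstar M g l u x ∂H)) := by
      have h1 := (hconv (fun x => ψ (l*x/u)) (hfc u hu)).const_mul k
      have h2 : ∀ j, k * (∫ x, ψ (l*x/u) ∂(Hn (σ j))) = v (σ j) := fun j => by
        rw [← hveq (σ j), htst u hu]
      rw [htst u hu]
      exact Tendsto.congr h2 h1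
    have hlimv : Tendsto (fun j => v (σ j)) atTop
        (𝓝 (sSup ((fun H => k * ∫ x, tstar M g l u x ∂H) '' MPC μF))) :=
      hvlim.comp (hσ.tendsto_atTop)
    have hkey : k * ∫ x, tstar M g l u x ∂H =
        sSup ((fun H => k * ∫ x, tstar M g l u x ∂H) '' MPC μF) :=
      tendsto_nhds_unique hval hlimv
    refine ⟨H, hHmem, fun Hhat hHhat => ?_, by rw [hV, ← hkey]⟩
    rw [hkey]
    exact le_csSup (hAbdd u hu) ⟨Hhat, hHhat, rfl⟩
  -- Part 4 : vanishing above βl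
  have hβl : 0 < M.β * l := mul_pos hβ hl0
  have part4 : ∀ u : ℝ, M.β * l ≤ u → V u = 0 := by
    intro u hu
    have hu0 : 0 < u := lt_of_lt_of_le hβl hu
    have hz : ∀ H ∈ MPC μF, (∫ x, tstar M g l u x ∂H) = 0 := by
      intro H hH
      haveI := hH.1
      have hae : (tstar M g l u) =ᵐ[H] (fun _ => (0:ℝ)) := by
        refine (Stmt12Aux.ae_mem_Icc H hH.2.1).mono (fun x hx => ?_)
        show (if M.β * l * x > u then g (l * x / u) else 0) = 0
        refine if_neg (not_lt.2 ?_)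
        nlinarith [hx.1, hx.2]
      rw [integral_congr_ae hae, integral_const]
      simp
    refine le_antisymm (hVle u 0 (fun H hH => by rw [hz H hH, mul_zero])) ?_
    have h := hVub u hu0 μF hμF
    rwa [hz μF hμF, mul_zero] at h
  -- Part 3 : antitone
  have part3 : AntitoneOn V (Ioi 0) := by
    intro u hu u' hu' huu'
    have hC : ∀ x ∈ Icc (0:ℝ) 1, ψ (l*x/u') ≤ ψ (l*x/u) + 0 := by
      intro x hx
      rw [add_zero]
      refine hψm ?_
      rw [div_le_div_iff₀ hu' hu]
      nlinarith [mul_nonneg hl0.le hx.1]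
    have h := hcomp u u' hu hu' 0 hC
    simpa using h
  -- Part 2 : continuity
  have part2 : ContinuousOn V (Ioi 0) := by
    intro u hu
    have hu0 : (0:ℝ) < u := hu
    rw [Metric.continuousWithinAt_iff]
    intro ε hε
    obtain ⟨δ₀, hδ₀, hδ₀'⟩ := (Metric.uniformContinuousOn_iff.1
      (isCompact_Icc.uniformContinuousOn_of_continuous
        (hψc.continuousOn : ContinuousOn ψ (Icc 0 (2*l/u))))) (ε/(2*k)) (by positivity)
    set δ := min (u/2) (δ₀ * u^2 / (4*l)) with hδdef
    have hδpos : 0 < δ := lt_min (by positivity) (by positivity)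
    refine ⟨δ, hδpos, fun u' hu' hdist => ?_⟩
    have hu'0 : (0:ℝ) < u' := hu'
    rw [Real.dist_eq] at hdist
    have hu'half : u/2 < u' := by
      have h1 : |u' - u| < u/2 := lt_of_lt_of_le hdist (min_le_left _ _)
      rw [abs_sub_lt_iff] at h1; linarith [h1.2]
    have hC : ∀ x ∈ Icc (0:ℝ) 1, ψ (l*x/u') ≤ ψ (l*x/u) + ε/(2*k) ∧
        ψ (l*x/u) ≤ ψ (l*x/u') + ε/(2*k) := by
      intro x hx
      have hlx0 : 0 ≤ l*x := mul_nonneg hl0.le hx.1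
      have hlxl : l*x ≤ l := by nlinarith [hx.2]
      have hmem1 : l*x/u ∈ Icc (0:ℝ) (2*l/u) := by
        constructor
        · positivity
        · rw [div_le_div_iff₀ hu0 hu0]
          nlinarith
      have hmem2 : l*x/u' ∈ Icc (0:ℝ) (2*l/u) := by
        constructor
        · positivity
        · rw [div_le_div_iff₀ hu'0 hu0]
          nlinarith
      have hd : dist (l*x/u') (l*x/u) < δ₀ := by
        rw [Real.dist_eq]
        have hq : l*x/u' - l*x/u = (l*x*(u - u'))/(u'*u) := by
          field_simp
        rw [hq, abs_div, abs_of_pos (mul_pos hu'0 hu0)]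
        have hnum : |l*x*(u-u')| ≤ l * δ := by
          rw [abs_mul, abs_of_nonneg hlx0, abs_sub_comm]
          nlinarith [abs_nonneg (u' - u), hdist]
        have hden2 : u*u/2 < u'*u := by nlinarith
        have hδ2 : δ ≤ δ₀ * u^2/(4*l) := min_le_right _ _
        calc |l*x*(u-u')| / (u'*u) ≤ (l*δ)/(u*u/2) :=
              div_le_div₀ (by positivity) hnum (by positivity) hden2.le
          _ ≤ (l*(δ₀ * u^2/(4*l)))/(u*u/2) := by gcongr
          _ = δ₀/2 := by field_simp; ring
          _ < δ₀ := by linarith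
      have h := hδ₀' _ hmem2 _ hmem1 hd
      rw [Real.dist_eq, abs_sub_lt_iff] at h
      exact ⟨by linarith [h.1], by linarith [h.2]⟩
    have h1 := hcomp u u' hu0 hu'0 (ε/(2*k)) (fun x hx => (hC x hx).1)
    have h2 := hcomp u' u hu'0 hu0 (ε/(2*k)) (fun x hx => (hC x hx).2)
    have hk2 : k * (ε/(2*k)) = ε/2 := by field_simp
    rw [hk2] at h1 h2
    rw [Real.dist_eq, abs_sub_lt_iff]
    exact ⟨by linarith, by linarith⟩
  -- Part 5 : blow-up at 0
  have part5 : Tendsto V (nhdsWithin 0 (Ioi 0)) atTop := by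
    have hcex : ∃ c : ℝ, 0 < c ∧ c ≤ 1 ∧ 0 < μF (Icc c 1) := by
      by_contra hcon
      push_neg at hcon
      have hnull : ∀ n : ℕ, μF (Icc (1/((n:ℝ)+1)) 1) = 0 := by
        intro n
        have h1 : (0:ℝ) < 1/((n:ℝ)+1) := by positivity
        have h2 : (1:ℝ)/((n:ℝ)+1) ≤ 1 := by
          rw [div_le_one (by positivity)]
          linarith [Nat.cast_nonneg (α := ℝ) n]
        exact le_antisymm (hcon _ h1 h2) zero_le
      have hUnull : μF (⋃ n : ℕ, Icc (1/((n:ℝ)+1)) 1) = 0 := measure_iUnion_null hnull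
      have hIoc : Ioc (0:ℝ) 1 ⊆ ⋃ n : ℕ, Icc (1/((n:ℝ)+1)) 1 := by
        intro x hx
        obtain ⟨n, hn⟩ := exists_nat_one_div_lt hx.1
        exact mem_iUnion.2 ⟨n, hn.le, hx.2⟩
      have h1 : μF (Ioc (0:ℝ) 1) = 0 := measure_mono_null hIoc hUnull
      have h0 : μF {(0:ℝ)} = 0 := hac Real.volume_singleton
      have h2 : μF (Icc (0:ℝ) 1) = 0 := by
        refine measure_mono_null (fun x hx => ?_) (measure_union_null h0 h1)
        rcases eq_or_lt_of_le hx.1 with heq | hlt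
        · exact Or.inl (by simp [← heq])
        · exact Or.inr ⟨hlt, hx.2⟩
      have h3 := Stmt12Aux.icc_one μF hsupp
      rw [h2] at h3
      exact zero_ne_one h3
    obtain ⟨c, hc0, hc1, hcpos⟩ := hcex
    have hm₀pos : 0 < (μF (Icc c 1)).toReal := ENNReal.toReal_pos hcpos.ne' (measure_ne_top μF (Icc c 1))
    have hlow : ∀ u : ℝ, 0 < u → k * (ψ (l*c/u) * (μF (Icc c 1)).toReal) ≤ V u := by
      intro u hu
      refine le_trans ?_ (hVub u hu μF hμF)
      refine mul_le_mul_of_nonneg_left ?_ hk.le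
      rw [htst u hu]
      have hint : Integrable (fun x => ψ (l*x/u)) μF :=
        Stmt12Aux.integrable_of_icc_bound μF hsupp (hfc u hu).aestronglyMeasurable (hbnd u hu)
      calc ψ (l*c/u) * (μF (Icc c 1)).toReal = ∫ _ in Icc c 1, ψ (l*c/u) ∂μF := by
            rw [setIntegral_const, smul_eq_mul, mul_comm, measureReal_def]
        _ ≤ ∫ x in Icc c 1, ψ (l*x/u) ∂μF := by
            refine setIntegral_mono_on (integrableOn_const (measure_lt_top _ _).ne)
              hint.integrableOn measurableSet_Icc (fun x hx => hψm ?_)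
            rw [div_le_div_iff₀ hu hu]
            nlinarith [mul_nonneg (mul_pos hl0 hu).le (by linarith [hx.1] : (0:ℝ) ≤ x - c)]
        _ ≤ ∫ x, ψ (l*x/u) ∂μF :=
            setIntegral_le_integral hint (Eventually.of_forall fun x => hψ0 _)
    rw [tendsto_atTop]
    intro b
    obtain ⟨T, hT⟩ := eventually_atTop.1 ((tendsto_atTop.1 hgtop) (b/(k*(μF (Icc c 1)).toReal)))
    have hT1 : (0:ℝ) < max T 1 := lt_of_lt_of_le one_pos (le_max_right _ _)
    have hev : Ioo (0:ℝ) (l*c/(max T 1)) ∈ nhdsWithin 0 (Ioi 0) :=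
      Ioo_mem_nhdsGT_of_mem ⟨le_refl 0, by positivity⟩
    filter_upwards [hev] with u hu
    have hu0 : 0 < u := hu.1
    have hTle : max T 1 ≤ l*c/u := by
      rw [le_div_iff₀ hu0]
      have h := hu.2
      rw [lt_div_iff₀ hT1] at h
      linarith
    have hψT : b/(k*(μF (Icc c 1)).toReal) ≤ ψ (l*c/u) := by
      refine hT _ ?_
      exact le_trans (le_max_left T 1) (hTle.trans (le_max_left _ _))
    have hb : b ≤ k * (ψ (l*c/u) * (μF (Icc c 1)).toReal) := by
      rw [div_le_iff₀ (by positivity)] at hψT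
      nlinarith
    exact hb.trans (hlow u hu0)
  -- Part 6 : unique crossing
  have part6 : ∃! u : ℝ, u ∈ Ioo 0 (M.β * l) ∧ V u = 1 := by
    have hev2 : ∀ᶠ u in nhdsWithin 0 (Ioi 0), 2 ≤ V u := part5.eventually_ge_atTop 2
    have h1 : Ioo (0:ℝ) (M.β*l) ∈ nhdsWithin 0 (Ioi 0) :=
      Ioo_mem_nhdsGT_of_mem ⟨le_refl 0, hβl⟩
    obtain ⟨u₀, hu₀V, hu₀mem⟩ := (hev2.and (eventually_of_mem h1 (fun x hx => hx))).exists
    have hcont : ContinuousOn V (Icc u₀ (M.β*l)) :=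
      part2.mono (fun x hx => lt_of_lt_of_le hu₀mem.1 hx.1)
    have hVbl : V (M.β*l) = 0 := part4 _ le_rfl
    have hsub : (1:ℝ) ∈ Icc (V (M.β*l)) (V u₀) := by
      rw [hVbl]; exact ⟨by norm_num, by linarith⟩
    obtain ⟨ub, hubmem, hubV⟩ := intermediate_value_Icc' hu₀mem.2.le hcont hsub
    have hubIoo : ub ∈ Ioo 0 (M.β*l) := by
      constructor
      · exact lt_of_lt_of_le hu₀mem.1 hubmem.1
      · rcases lt_or_eq_of_le hubmem.2 with h | h
        · exact h
        · exfalso; rw [h, hVbl] at hubV; norm_num at hubV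
    have key : ∀ u₁ u₂ : ℝ, u₁ ∈ Ioo 0 (M.β*l) → u₂ ∈ Ioo 0 (M.β*l) → u₁ < u₂ →
        V u₂ = 1 → V u₁ = 1 → False := by
      intro u₁ u₂ hm1 hm2 h12 hV2 hV1'
      obtain ⟨H₂, hH₂, _, hval2⟩ := part1 u₂ hm2.1
      haveI := hH₂.1
      have hpos : 0 < ∫ x, tstar M g l u₂ x ∂H₂ := by
        rcases lt_or_eq_of_le (hI0 u₂ hm2.1 H₂ hH₂) with h | h
        · exact h
        · exfalso
          rw [← h, mul_zero] at hval2
          rw [hval2] at hV2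
          norm_num at hV2
      have hdnn : 0 ≤ᵐ[H₂] (fun x => tstar M g l u₁ x - tstar M g l u₂ x) := by
        refine (Stmt12Aux.ae_mem_Icc H₂ hH₂.2.1).mono (fun x hx => ?_)
        have : tstar M g l u₂ x ≤ tstar M g l u₁ x := by
          rw [htst u₁ hm1.1, htst u₂ hm2.1]
          refine hψm ?_
          rw [div_le_div_iff₀ hm2.1 hm1.1]
          nlinarith [mul_nonneg hl0.le hx.1]
        simpa using this
      have hdint : Integrable (fun x => tstar M g l u₁ x - tstar M g l u₂ x) H₂ :=
        (hInt u₁ hm1.1 H₂ hH₂).sub (hInt u₂ hm2.1 H₂ hH₂)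
      have hdpos : 0 < ∫ x, (tstar M g l u₁ x - tstar M g l u₂ x) ∂H₂ := by
        rcases lt_or_eq_of_le (integral_nonneg_of_ae hdnn) with h | h
        · exact h
        · exfalso
          have hd0 := (integral_eq_zero_iff_of_nonneg_ae hdnn hdint).1 h.symm
          have ht0 : (tstar M g l u₂) =ᵐ[H₂] (fun _ => (0:ℝ)) := by
            refine ((Stmt12Aux.ae_mem_Icc H₂ hH₂.2.1).and hd0).mono (fun x hx => ?_)
            obtain ⟨hxI, hxd⟩ := hx
            show tstar M g l u₂ x = 0
            by_contra hne
            have hcond : u₂ < M.β * l * x := by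
              by_contra hc
              exact hne (if_neg hc)
            have hx0 : 0 < x := by nlinarith [hm2.1]
            have hmem2 : 1/M.β ≤ l*x/u₂ := by
              rw [div_le_div_iff₀ hβ hm2.1]
              nlinarith
            have hmem1 : 1/M.β ≤ l*x/u₁ := by
              rw [div_le_div_iff₀ hβ hm1.1]
              nlinarith
            have hltarg : l*x/u₂ < l*x/u₁ := by
              have hlx : 0 < l*x := mul_pos hl0 hx0
              rw [div_lt_div_iff₀ hm2.1 hm1.1]
              nlinarith
            have hglt : g (l*x/u₂) < g (l*x/u₁) :=
              hgmono (mem_Ici.2 hmem2) (mem_Ici.2 hmem1) hltarg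
            have e2 : tstar M g l u₂ x = g (l*x/u₂) := if_pos hcond
            have e1 : tstar M g l u₁ x = g (l*x/u₁) := if_pos (by nlinarith)
            have hxd' : tstar M g l u₁ x - tstar M g l u₂ x = 0 := hxd
            rw [e1, e2] at hxd'
            linarith
          have : (∫ x, tstar M g l u₂ x ∂H₂) = 0 := by
            rw [integral_congr_ae ht0]
            simp
          linarith
      have hVub1 := hVub u₁ hm1.1 H₂ hH₂
      have hsplit := integral_sub (hInt u₁ hm1.1 H₂ hH₂) (hInt u₂ hm2.1 H₂ hH₂)
      rw [hval2] at hV2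
      nlinarith [mul_pos hk hdpos]
    refine ⟨ub, ⟨hubIoo, hubV⟩, fun u hu => ?_⟩
    rcases lt_trichotomy u ub with h | h | h
    · exact (key u ub hu.1 hubIoo h hubV hu.2).elim
    · exact h
    · exact (key ub u hubIoo hu.1 h hu.2 hubV).elim
  exact ⟨part1, part2, part3, part4, part5, part6⟩
end
end

section
/- Define φ(ν, u) := g(w(ν)/u)·1[β·w(ν) > u], S(σ, u) := k ∫ m(φ(ν,u)) E_ν[θ] dσ_μ(ν), and U(σ, u) := k ∫ m(φ(ν,u)) w(ν) dσ_μ(ν); let ū_max := β·sup_{θ∈[0,1]} λ(θ)θ, and for each segmentation σ let u*_σ ∈ (0, ū_max) be its unique equilibrium payoff (the unique fixed point of u ↦ U(σ, u)). Then a market segmentation σ maximizes S(σ, u*_σ) over all market segmentations (i.e., σ is constrained-efficient) if and only if the pair (σ, u*_σ) maximizes S(σ̂, u) over all pairs (σ̂, u) with σ̂ a market segmentation, u ∈ [0, ū_max], and U(σ̂, u) ≤ u. -/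
open MeasureTheory Set Filter Topology ProbabilityTheory

noncomputable section

/-- The measure `σ_μ` over submarkets induced by a market segmentation `σ` and prior `μ`. -/
def segMeasure (μ : Measure Θ) (σ : Kernel Θ PM) : Measure PM :=
  μ.bind (fun θ => σ θ)

/-- Bayes consistency of a segmentation: for all Borel `A ⊆ Θ` and Borel `B` of submarkets,
`∫_A σ(B,θ) dμ(θ) = ∫_B ν(A) dσ_μ(ν)`. -/
def BayesConsistent (μ : Measure Θ) (σ : Kernel Θ PM) : Prop :=
  ∀ A : Set Θ, MeasurableSet A → ∀ B : Set PM, MeasurableSet B →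
    ∫ θ in A, ((σ θ) B).toReal ∂μ = ∫ ν in B, ((ν : Measure Θ) A).toReal ∂(segMeasure μ σ)

/-- The set of market segmentations for a prior `μ`. -/
def Seg (μ : Measure Θ) : Set (Kernel Θ PM) :=
  {σ | IsMarkovKernel σ ∧ BayesConsistent μ σ}

/-- Buyers' expected payoff conditional on trade in submarket `ν`: `w(ν) = ∫ λ(θ)θ dν(θ)`. -/
def wOf (lam : Θ → ℝ) (ν : PM) : ℝ := ∫ θ, lam θ * (θ : ℝ) ∂(ν : Measure Θ)

/-- `φ(ν,u) = g(w(ν)/u)·1[β w(ν) > u]`. -/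
def phi (M : MeetingFunction) (g : ℝ → ℝ) (lam : Θ → ℝ) (ν : PM) (u : ℝ) : ℝ :=
  if M.β * wOf lam ν > u then g (wOf lam ν / u) else 0

/-- Ex-ante total surplus `S(σ,u) = k ∫ m(φ(ν,u)) E_ν[θ] dσ_μ(ν)`. -/
def Sval (M : MeetingFunction) (g : ℝ → ℝ) (k : ℝ) (lam : Θ → ℝ) (μ : Measure Θ)
    (σ : Kernel Θ PM) (u : ℝ) : ℝ :=
  k * ∫ ν, M.m (phi M g lam ν u) * Eθ ν ∂(segMeasure μ σ)

/-- Ex-ante buyers' payoff `U(σ,u) = k ∫ m(φ(ν,u)) w(ν) dσ_μ(ν)`. -/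
def Uval (M : MeetingFunction) (g : ℝ → ℝ) (k : ℝ) (lam : Θ → ℝ) (μ : Measure Θ)
    (σ : Kernel Θ PM) (u : ℝ) : ℝ :=
  k * ∫ ν, M.m (phi M g lam ν u) * wOf lam ν ∂(segMeasure μ σ)

/-- The upper bound `ū_max = β · sup_θ λ(θ)θ` on buyers' payoffs. -/
def umax (M : MeetingFunction) (lam : Θ → ℝ) : ℝ := M.β * ⨆ θ : Θ, lam θ * (θ : ℝ)

namespace Stmt18Aux
open scoped NNReal ENNReal BoundedContinuousFunction

instance : BorelSpace PM := ⟨rfl⟩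

lemma pm_meas_lintegral_bcf (f : BoundedContinuousFunction Θ NNReal) :
    Measurable fun ν : PM => ∫⁻ x, f x ∂(ν : Measure Θ) := by
  have hc : Continuous fun ν : PM =>
      ((ν.toFiniteMeasure.testAgainstNN f : ℝ≥0) : ℝ≥0∞) :=
    ENNReal.continuous_coe.comp (ProbabilityMeasure.continuous_testAgainstNN_eval f)
  have he : (fun ν : PM => ∫⁻ x, f x ∂(ν : Measure Θ)) =
      fun ν : PM => ((ν.toFiniteMeasure.testAgainstNN f : ℝ≥0) : ℝ≥0∞) := by
    funext ν
    rw [FiniteMeasure.testAgainstNN_coe_eq, ν.toMeasure_comp_toFiniteMeasure_eq_toMeasure]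
  rw [he]
  exact hc.measurable

lemma pm_meas_eval {s : Set Θ} (hs : MeasurableSet s) :
    Measurable fun ν : PM => (ν : Measure Θ) s := by
  have h_eq : (inferInstance : MeasurableSpace Θ) =
      MeasurableSpace.generateFrom {t : Set Θ | IsClosed t} := by
    rw [BorelSpace.measurable_eq (α := Θ), borel_eq_generateFrom_isClosed]
  refine MeasurableSpace.induction_on_inter
    (C := fun t _ => Measurable fun ν : PM => (ν : Measure Θ) t)
    h_eq isPiSystem_isClosed ?_ ?_ ?_ ?_ _ hs
  · simp only [measure_empty]; exact measurable_const
  · intro t (ht : IsClosed t)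
    have key : ∀ ν : PM, Tendsto (fun n => ∫⁻ x, (ht.apprSeq n) x ∂(ν : Measure Θ))
        atTop (𝓝 ((ν : Measure Θ) t)) := fun ν =>
      HasOuterApproxClosed.tendsto_lintegral_apprSeq ht (ν : Measure Θ)
    exact measurable_of_tendsto_metrizable
      (fun n => pm_meas_lintegral_bcf (ht.apprSeq n))
      (tendsto_pi_nhds.2 key)
  · intro t htm hC
    have he : (fun ν : PM => (ν : Measure Θ) tᶜ) =
        fun ν : PM => 1 - (ν : Measure Θ) t := by
      funext ν
      rw [measure_compl htm (measure_ne_top _ _), measure_univ]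
    rw [he]
    exact measurable_const.sub hC
  · intro f hdisj hm hC
    have he : (fun ν : PM => (ν : Measure Θ) (⋃ i, f i)) =
        fun ν : PM => ∑' i, (ν : Measure Θ) (f i) := by
      funext ν; exact measure_iUnion hdisj hm
    rw [he]
    exact Measurable.ennreal_tsum hC

lemma pm_meas_toMeasure : Measurable fun ν : PM => (ν : Measure Θ) :=
  Measure.measurable_of_measurable_coe _ fun _ hs => pm_meas_eval hs

lemma pm_meas_lintegral {f : Θ → ℝ≥0∞} (hf : Measurable f) :
    Measurable fun ν : PM => ∫⁻ x, f x ∂(ν : Measure Θ) :=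
  (Measure.measurable_lintegral hf).comp pm_meas_toMeasure

lemma pm_meas_integral {f : Θ → ℝ} (hf : Measurable f) (h0 : ∀ x, 0 ≤ f x) :
    Measurable fun ν : PM => ∫ x, f x ∂(ν : Measure Θ) := by
  have he : (fun ν : PM => ∫ x, f x ∂(ν : Measure Θ)) =
      fun ν : PM => (∫⁻ x, ENNReal.ofReal (f x) ∂(ν : Measure Θ)).toReal := by
    funext ν
    exact integral_eq_lintegral_of_nonneg_ae (ae_of_all _ h0) hf.aestronglyMeasurable
  rw [he]
  exact (pm_meas_lintegral (ENNReal.measurable_ofReal.comp hf)).ennreal_toReal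

lemma integral_mem_Icc {f : Θ → ℝ} (hf : Measurable f) (hb : ∀ x, f x ∈ Icc (0:ℝ) 1) (ν : PM) :
    (∫ x, f x ∂(ν : Measure Θ)) ∈ Icc (0:ℝ) 1 := by
  constructor
  · exact integral_nonneg fun x => (hb x).1
  · have hint : Integrable f (ν : Measure Θ) :=
      (integrable_const (1:ℝ)).mono' hf.aestronglyMeasurable
        (ae_of_all _ fun x => by
          rw [Real.norm_eq_abs, abs_of_nonneg (hb x).1]; exact (hb x).2)
    calc (∫ x, f x ∂(ν : Measure Θ)) ≤ ∫ _, (1:ℝ) ∂(ν : Measure Θ) :=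
          integral_mono hint (integrable_const 1) fun x => (hb x).2
      _ = 1 := by simp

lemma measurable_wOf {lam : Θ → ℝ} (hlam_meas : Measurable lam)
    (hlam : ∀ θ, lam θ ∈ Icc (0:ℝ) 1) : Measurable (wOf lam) := by
  unfold wOf
  exact pm_meas_integral (hlam_meas.mul measurable_subtype_coe)
    fun θ => mul_nonneg (hlam θ).1 θ.2.1

lemma measurable_Eθ : Measurable Eθ := by
  unfold Eθ
  exact pm_meas_integral measurable_subtype_coe fun θ => θ.2.1

lemma m_nonneg (M : MeetingFunction) {t : ℝ} (ht : 0 ≤ t) : 0 ≤ M.m t := by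
  rcases ht.eq_or_lt with h | h
  · rw [← h, M.m_zero]
  · have := M.mono Set.self_mem_Ici (Set.mem_Ici.mpr h.le) h
    rw [M.m_zero] at this
    exact this.le

lemma m_le_one (M : MeetingFunction) {t : ℝ} (ht : 0 ≤ t) : M.m t ≤ 1 :=
  (M.m_le t ht).trans (min_le_left _ _)

lemma g_nonneg {M : MeetingFunction} {g : ℝ → ℝ} (hg0 : g (1 / M.β) = 0)
    (hgmono : StrictMonoOn g (Ici (1 / M.β))) {x : ℝ} (hx : 1 / M.β ≤ x) : 0 ≤ g x := by
  rcases hx.eq_or_lt with h | h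
  · rw [← h, hg0]
  · have := hgmono Set.self_mem_Ici (Set.mem_Ici.mpr hx) h
    rw [hg0] at this
    exact this.le

lemma one_div_beta_le {M : MeetingFunction} {w u : ℝ} (hu : 0 < u) (h : u < M.β * w) :
    1 / M.β ≤ w / u := by
  have hβ := M.β_mem.1
  rw [div_le_div_iff₀ hβ hu]
  nlinarith

lemma phi_nonneg (M : MeetingFunction) (g : ℝ → ℝ) (hg0 : g (1 / M.β) = 0)
    (hgmono : StrictMonoOn g (Ici (1 / M.β))) (lam : Θ → ℝ) (ν : PM) {u : ℝ} (hu : 0 < u) :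
    0 ≤ phi M g lam ν u := by
  unfold phi
  split_ifs with h
  · exact g_nonneg hg0 hgmono (one_div_beta_le hu h)
  · exact le_refl 0

lemma mphi_mem (M : MeetingFunction) (g : ℝ → ℝ) (hg0 : g (1 / M.β) = 0)
    (hgmono : StrictMonoOn g (Ici (1 / M.β))) (lam : Θ → ℝ) (ν : PM) {u : ℝ} (hu : 0 < u) :
    M.m (phi M g lam ν u) ∈ Icc (0:ℝ) 1 :=
  ⟨m_nonneg M (phi_nonneg M g hg0 hgmono lam ν hu),
   m_le_one M (phi_nonneg M g hg0 hgmono lam ν hu)⟩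

lemma mphi_anti (M : MeetingFunction) (g : ℝ → ℝ) (hg0 : g (1 / M.β) = 0)
    (hgmono : StrictMonoOn g (Ici (1 / M.β))) (lam : Θ → ℝ) (ν : PM) {u u' : ℝ}
    (hu : 0 < u) (huu : u ≤ u') (hw : 0 ≤ wOf lam ν) :
    M.m (phi M g lam ν u') ≤ M.m (phi M g lam ν u) := by
  have hmm : MonotoneOn M.m (Ici 0) := M.mono.monotoneOn
  have hgm : MonotoneOn g (Ici (1 / M.β)) := hgmono.monotoneOn
  by_cases h' : M.β * wOf lam ν > u'
  · have h : M.β * wOf lam ν > u := lt_of_le_of_lt huu h'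
    have h1 : 1 / M.β ≤ wOf lam ν / u' := one_div_beta_le (lt_of_lt_of_le hu huu) h'
    have h2 : 1 / M.β ≤ wOf lam ν / u := one_div_beta_le hu h
    have hdiv : wOf lam ν / u' ≤ wOf lam ν / u := by
      apply div_le_div_of_nonneg_left hw hu huu
    have hphi : phi M g lam ν u' ≤ phi M g lam ν u := by
      unfold phi
      rw [if_pos h', if_pos h]
      exact hgm (Set.mem_Ici.mpr h1) (Set.mem_Ici.mpr h2) hdiv
    exact hmm (Set.mem_Ici.mpr (phi_nonneg M g hg0 hgmono lam ν (lt_of_lt_of_le hu huu)))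
      (Set.mem_Ici.mpr (phi_nonneg M g hg0 hgmono lam ν hu)) hphi
  · have hz : phi M g lam ν u' = 0 := by unfold phi; rw [if_neg h']
    rw [hz, M.m_zero]
    exact m_nonneg M (phi_nonneg M g hg0 hgmono lam ν hu)

lemma meas_mphi (M : MeetingFunction) (g : ℝ → ℝ) (hg0 : g (1 / M.β) = 0)
    (hgmono : StrictMonoOn g (Ici (1 / M.β))) (hgcont : ContinuousOn g (Ici (1 / M.β)))
    {lam : Θ → ℝ} (hlam_meas : Measurable lam) (hlam : ∀ θ, lam θ ∈ Icc (0:ℝ) 1)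
    {u : ℝ} (hu : 0 < u) :
    Measurable fun ν : PM => M.m (phi M g lam ν u) := by
  have hw : Measurable (wOf lam) := measurable_wOf hlam_meas hlam
  have hGext : Continuous fun x : ℝ => g (max x (1 / M.β)) :=
    hgcont.comp_continuous (continuous_id.max continuous_const)
      fun x => Set.mem_Ici.mpr (le_max_right _ _)
  have hMext : Monotone fun t : ℝ => M.m (max t 0) := fun a b hab =>
    M.mono.monotoneOn (Set.mem_Ici.mpr (le_max_right _ _))
      (Set.mem_Ici.mpr (le_max_right _ _)) (max_le_max hab le_rfl)
  have he : (fun ν : PM => M.m (phi M g lam ν u)) = fun ν : PM =>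
      if u < M.β * wOf lam ν then
        (fun t => M.m (max t 0)) ((fun x => g (max x (1 / M.β))) (wOf lam ν / u)) else 0 := by
    funext ν
    unfold phi
    by_cases h : M.β * wOf lam ν > u
    · rw [if_pos h, if_pos h]
      have h1 : 1 / M.β ≤ wOf lam ν / u := one_div_beta_le hu h
      simp only [max_eq_left h1, max_eq_left (g_nonneg hg0 hgmono h1)]
    · rw [if_neg h, if_neg h, M.m_zero]
  rw [he]
  exact Measurable.ite (measurableSet_lt measurable_const (measurable_const.mul hw))
    ((hMext.measurable.comp hGext.measurable).comp (hw.div_const u)) measurable_const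

lemma seg_isProb (μ : Measure Θ) [IsProbabilityMeasure μ] (σ : Kernel Θ PM)
    [IsMarkovKernel σ] : IsProbabilityMeasure (segMeasure μ σ) := by
  constructor
  rw [segMeasure, Measure.bind_apply MeasurableSet.univ (Kernel.measurable σ).aemeasurable]
  simp

end Stmt18Aux


/-- A market segmentation `σ` is constrained-efficient (maximizes
`S(σ', u*_{σ'})` over segmentations) iff the pair `(σ, u*_σ)` maximizes `S(σ', u)` over all
pairs of a segmentation `σ'` and `u ∈ [0, ū_max]` with `U(σ', u) ≤ u`. -/
theorem stmt18 (M : MeetingFunction) (g : ℝ → ℝ)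
    (hg0 : g (1 / M.β) = 0)
    (hgmono : StrictMonoOn g (Ici (1 / M.β)))
    (hgcont : ContinuousOn g (Ici (1 / M.β)))
    (hgtop : Tendsto g atTop atTop)
    (hginv : ∀ t > (0:ℝ), g (t / M.m t) = t)
    (k : ℝ) (hk : 0 < k)
    (μ : Measure Θ) [IsProbabilityMeasure μ] (hac : μ ≪ (volume : Measure Θ))
    (lam : Θ → ℝ) (hlam_meas : Measurable lam) (hlam : ∀ θ, lam θ ∈ Icc (0:ℝ) 1)
    (hlam_pos : 0 < μ {θ | 0 < lam θ})
    (ustar : Kernel Θ PM → ℝ)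
    (hustar : ∀ σ' ∈ Seg μ, ustar σ' ∈ Ioo 0 (umax M lam) ∧
      Uval M g k lam μ σ' (ustar σ') = ustar σ' ∧
      ∀ u ∈ Ioo 0 (umax M lam), Uval M g k lam μ σ' u = u → u = ustar σ')
    (σ : Kernel Θ PM) (hσ : σ ∈ Seg μ) :
    (∀ σ' ∈ Seg μ, Sval M g k lam μ σ' (ustar σ') ≤ Sval M g k lam μ σ (ustar σ)) ↔
    (∀ σ' ∈ Seg μ, ∀ u ∈ Icc 0 (umax M lam), Uval M g k lam μ σ' u ≤ u →
      Sval M g k lam μ σ' u ≤ Sval M g k lam μ σ (ustar σ)) := by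
  
  classical
  have hβ : 0 < M.β := M.β_mem.1
  have hwE : ∀ ν : PM, wOf lam ν ∈ Icc (0:ℝ) 1 := fun ν =>
    Stmt18Aux.integral_mem_Icc (hlam_meas.mul measurable_subtype_coe)
      (fun θ => ⟨mul_nonneg (hlam θ).1 θ.2.1, mul_le_one₀ (hlam θ).2 θ.2.1 θ.2.2⟩) ν
  have hEE : ∀ ν : PM, Eθ ν ∈ Icc (0:ℝ) 1 := fun ν =>
    Stmt18Aux.integral_mem_Icc measurable_subtype_coe (fun θ => ⟨θ.2.1, θ.2.2⟩) ν
  have hwmeas : Measurable (wOf lam) := Stmt18Aux.measurable_wOf hlam_meas hlam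
  have hEmeas : Measurable Eθ := Stmt18Aux.measurable_Eθ
  -- master inequality: any feasible pair (σ', u) has surplus at most S(σ', u*_{σ'})
  have master : ∀ σ' ∈ Seg μ, ∀ u ∈ Icc 0 (umax M lam), Uval M g k lam μ σ' u ≤ u →
      Sval M g k lam μ σ' u ≤ Sval M g k lam μ σ' (ustar σ') := by
    intro σ' hσ' u hu hUle
    haveI hmk : IsMarkovKernel σ' := hσ'.1
    haveI : IsProbabilityMeasure (segMeasure μ σ') := Stmt18Aux.seg_isProb μ σ'
    obtain ⟨humem, hfix, _⟩ := hustar σ' hσ'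
    have hu₀ : 0 < ustar σ' := humem.1
    have int_bdd : ∀ {f : PM → ℝ}, Measurable f → (∀ ν, f ν ∈ Icc (0:ℝ) 1) →
        Integrable f (segMeasure μ σ') := by
      intro f hf hb
      refine (integrable_const (1:ℝ)).mono' hf.aestronglyMeasurable
        (ae_of_all _ fun ν => ?_)
      rw [Real.norm_eq_abs, abs_of_nonneg (hb ν).1]
      exact (hb ν).2
    have intU : ∀ {a : ℝ}, 0 < a →
        Integrable (fun ν => M.m (phi M g lam ν a) * wOf lam ν) (segMeasure μ σ') := by
      intro a ha
      refine int_bdd ((Stmt18Aux.meas_mphi M g hg0 hgmono hgcont hlam_meas hlam ha).mul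
        hwmeas) fun ν => ?_
      obtain ⟨h1, h2⟩ := Stmt18Aux.mphi_mem M g hg0 hgmono lam ν ha
      exact ⟨mul_nonneg h1 (hwE ν).1, mul_le_one₀ h2 (hwE ν).1 (hwE ν).2⟩
    have intS : ∀ {a : ℝ}, 0 < a →
        Integrable (fun ν => M.m (phi M g lam ν a) * Eθ ν) (segMeasure μ σ') := by
      intro a ha
      refine int_bdd ((Stmt18Aux.meas_mphi M g hg0 hgmono hgcont hlam_meas hlam ha).mul
        hEmeas) fun ν => ?_
      obtain ⟨h1, h2⟩ := Stmt18Aux.mphi_mem M g hg0 hgmono lam ν ha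
      exact ⟨mul_nonneg h1 (hEE ν).1, mul_le_one₀ h2 (hEE ν).1 (hEE ν).2⟩
    have Uanti : ∀ {a b : ℝ}, 0 < a → a ≤ b →
        Uval M g k lam μ σ' b ≤ Uval M g k lam μ σ' a := by
      intro a b ha hab
      unfold Uval
      refine mul_le_mul_of_nonneg_left ?_ hk.le
      refine integral_mono (intU (lt_of_lt_of_le ha hab)) (intU ha) fun ν => ?_
      exact mul_le_mul_of_nonneg_right
        (Stmt18Aux.mphi_anti M g hg0 hgmono lam ν ha hab (hwE ν).1) (hwE ν).1
    have Santi : ∀ {a b : ℝ}, 0 < a → a ≤ b →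
        Sval M g k lam μ σ' b ≤ Sval M g k lam μ σ' a := by
      intro a b ha hab
      unfold Sval
      refine mul_le_mul_of_nonneg_left ?_ hk.le
      refine integral_mono (intS (lt_of_lt_of_le ha hab)) (intS ha) fun ν => ?_
      exact mul_le_mul_of_nonneg_right
        (Stmt18Aux.mphi_anti M g hg0 hgmono lam ν ha hab (hwE ν).1) (hEE ν).1
    rcases hu.1.eq_or_lt with h0 | hpos
    · -- the degenerate case u = 0
      have hzero : u = 0 := h0.symm
      subst hzero
      have hWpos : 0 < ∫ ν, wOf lam ν ∂(segMeasure μ σ') := by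
        by_contra hcon
        push_neg at hcon
        have h0' : ∫ ν, wOf lam ν ∂(segMeasure μ σ') = 0 :=
          le_antisymm hcon (integral_nonneg fun ν => (hwE ν).1)
        have hW0 : wOf lam =ᵐ[segMeasure μ σ'] 0 :=
          (integral_eq_zero_iff_of_nonneg (fun ν => (hwE ν).1) (int_bdd hwmeas hwE)).1 h0'
        have hUz : Uval M g k lam μ σ' (ustar σ') = 0 := by
          unfold Uval
          have hfz : (fun ν => M.m (phi M g lam ν (ustar σ')) * wOf lam ν)
              =ᵐ[segMeasure μ σ'] 0 := by
            filter_upwards [hW0] with ν hν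
            simp only [Pi.zero_apply] at hν ⊢
            rw [hν, mul_zero]
          rw [integral_congr_ae hfz]
          simp
        rw [hfix] at hUz
        exact absurd hUz hu₀.ne'
      set c := M.m (g 0) with hc
      have hUint0 : (fun ν => M.m (phi M g lam ν 0) * wOf lam ν)
          = fun ν => c * wOf lam ν := by
        funext ν
        unfold phi
        by_cases h : M.β * wOf lam ν > 0
        · rw [if_pos h, div_zero]
        · rw [if_neg h, M.m_zero, zero_mul]
          have hw0 : wOf lam ν = 0 := by
            have := (hwE ν).1
            nlinarith [not_lt.mp h]
          rw [hw0, mul_zero]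
      have hU0 : Uval M g k lam μ σ' 0 = k * (c * ∫ ν, wOf lam ν ∂(segMeasure μ σ')) := by
        unfold Uval
        rw [hUint0, integral_const_mul]
      have hcle : c ≤ 0 := by
        rw [hU0] at hUle
        by_contra hcpos
        push_neg at hcpos
        nlinarith [mul_pos hk (mul_pos hcpos hWpos)]
      have hS0 : Sval M g k lam μ σ' 0 ≤ 0 := by
        unfold Sval
        have hle0 : ∫ ν, M.m (phi M g lam ν 0) * Eθ ν ∂(segMeasure μ σ') ≤ 0 := by
          refine integral_nonpos fun ν => ?_
          simp only [Pi.zero_apply]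
          unfold phi
          by_cases h : M.β * wOf lam ν > 0
          · rw [if_pos h, div_zero]
            exact mul_nonpos_of_nonpos_of_nonneg hcle (hEE ν).1
          · rw [if_neg h, M.m_zero, zero_mul]
        nlinarith
      have hSpos : 0 ≤ Sval M g k lam μ σ' (ustar σ') := by
        unfold Sval
        have : 0 ≤ ∫ ν, M.m (phi M g lam ν (ustar σ')) * Eθ ν ∂(segMeasure μ σ') :=
          integral_nonneg fun ν =>
            mul_nonneg (Stmt18Aux.mphi_mem M g hg0 hgmono lam ν hu₀).1 (hEE ν).1
        nlinarith
      linarith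
    · -- the case 0 < u
      have hle : ustar σ' ≤ u := by
        by_contra hlt
        push_neg at hlt
        have h1 := Uanti hpos hlt.le
        rw [hfix] at h1
        linarith
      exact Santi hu₀ hle
  constructor
  · intro hmax σ' hσ' u hu hUle
    exact (master σ' hσ' u hu hUle).trans (hmax σ' hσ')
  · intro hmax σ' hσ'
    obtain ⟨humem, hfix, _⟩ := hustar σ' hσ'
    exact hmax σ' hσ' (ustar σ') ⟨humem.1.le, humem.2.le⟩ hfix.le
end
end

section
/- Define φ(ν, u) := g(w(ν)/u)·1[β·w(ν) > u], S(σ, u) := k ∫ m(φ(ν,u)) E_ν[θ] dσ_μ(ν), U(σ, u) := k ∫ m(φ(ν,u)) w(ν) dσ_μ(ν), and ū_max := β·sup_{θ∈[0,1]} λ(θ)θ. If a pair (σ, u) maximizes S(σ̂, û) over all pairs (σ̂, û) with σ̂ a market segmentation, û ∈ [0, ū_max], and U(σ̂, û) ≤ û, then u > 0, the constraint binds (U(σ, u) = u), and u equals the equilibrium payoff u*_σ of σ (the unique fixed point of û ↦ U(σ, û) in (0, ū_max)). -/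
open MeasureTheory Set Filter Topology ProbabilityTheory

open BoundedContinuousFunction
open scoped NNReal

noncomputable section

instance : BorelSpace PM := ⟨rfl⟩

example : CompactSpace Θ := inferInstance
example : HasOuterApproxClosed Θ := inferInstance
example (ν : PM) : IsProbabilityMeasure (ν : Measure Θ) := inferInstance

example (x : Θ) : (volume : Measure Θ) {x} = 0 := by
  rw [unitInterval.volume_def,
    (MeasurableEmbedding.subtype_coe measurableSet_Icc).comap_apply]
  simp

lemma cont_lint (f : Θ →ᵇ ℝ≥0) : Continuous fun ν : PM => ∫⁻ x, f x ∂(ν : Measure Θ) := by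
  rw [continuous_iff_continuousAt]; intro ν
  exact ProbabilityMeasure.tendsto_iff_forall_lintegral_tendsto.mp tendsto_id f

lemma meas_closed {F : Set Θ} (hF : IsClosed F) :
    Measurable fun ν : PM => (ν : Measure Θ) F := by
  apply ENNReal.measurable_of_tendsto (f := fun n (ν : PM) => ∫⁻ x, hF.apprSeq n x ∂(ν : Measure Θ))
  · exact fun n => (cont_lint (hF.apprSeq n)).measurable
  · rw [tendsto_pi_nhds]
    exact fun ν => HasOuterApproxClosed.tendsto_lintegral_apprSeq hF (ν : Measure Θ)

lemma meas_toMeasure : Measurable (fun ν : PM => (ν : Measure Θ)) := by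
  apply Measure.measurable_of_measurable_coe
  intro s hs
  refine MeasurableSpace.induction_on_inter
    (C := fun s _ => Measurable fun ν : PM => (ν : Measure Θ) s)
    (BorelSpace.measurable_eq.trans borel_eq_generateFrom_isClosed)
    (fun F hF G hG _ => hF.inter hG) (by simp) (fun F hF => meas_closed hF)
    ?_ ?_ s hs
  · intro t ht h
    have : (fun ν : PM => (ν : Measure Θ) tᶜ) = fun ν : PM => 1 - (ν : Measure Θ) t := by
      funext ν
      rw [measure_compl ht (measure_ne_top _ _), measure_univ]
    rw [this]
    exact Measurable.const_sub h 1
  · intro f hdisj hmeas hrec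
    have : (fun ν : PM => (ν : Measure Θ) (⋃ i, f i))
        = fun ν : PM => ∑' i, (ν : Measure Θ) (f i) := by
      funext ν; exact measure_iUnion hdisj hmeas
    rw [this]
    exact Measurable.ennreal_tsum hrec

lemma meas_int {f : Θ → ℝ} (hf : Measurable f) (h0 : ∀ x, 0 ≤ f x) :
    Measurable fun ν : PM => ∫ x, f x ∂(ν : Measure Θ) := by
  have h : ∀ ν : PM, ∫ x, f x ∂(ν : Measure Θ)
      = (∫⁻ x, ENNReal.ofReal (f x) ∂(ν : Measure Θ)).toReal :=
    fun ν => integral_eq_lintegral_of_nonneg_ae (ae_of_all _ h0) hf.aestronglyMeasurable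
  simp_rw [h]
  exact ((Measure.measurable_lintegral (hf.ennreal_ofReal)).comp meas_toMeasure).ennreal_toReal

variable (M : MeetingFunction)

lemma m_nonneg : ∀ t ≥ (0:ℝ), 0 ≤ M.m t := by
  intro t ht
  rcases eq_or_lt_of_le ht with h | h
  · rw [← h, M.m_zero]
  · rw [← M.m_zero]
    exact (M.mono (self_mem_Ici) (le_of_lt h) h).le

lemma m_pos : ∀ t > (0:ℝ), 0 < M.m t := by
  intro t ht
  rw [← M.m_zero]
  exact M.mono self_mem_Ici ht.le ht

lemma m_le_one : ∀ t ≥ (0:ℝ), M.m t ≤ 1 :=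
  fun t ht => (M.m_le t ht).trans (min_le_left _ _)

lemma m_contOn : ContinuousOn M.m (Ici 0) := by
  intro t ht
  rcases eq_or_lt_of_le (mem_Ici.mp ht : (0:ℝ) ≤ t) with h | h
  · -- continuity at 0 within Ici 0
    subst h
    rw [ContinuousWithinAt, M.m_zero]
    apply squeeze_zero' (eventually_nhdsWithin_of_forall (fun x hx => m_nonneg M x hx))
      (eventually_nhdsWithin_of_forall (fun x (hx : x ∈ Ici 0) =>
        (M.m_le x hx).trans (min_le_right _ _)))
    exact (continuous_id.tendsto 0).mono_left nhdsWithin_le_nhds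
  · exact (M.diff1 t h).continuousAt.continuousWithinAt

lemma m_ratio_le : ∀ t > (0:ℝ), M.m t ≤ M.β * t := by
  intro t ht
  have key : ∀ s ∈ Ioo (0:ℝ) t, M.m t / t ≤ M.m s / s := by
    intro s hs
    obtain ⟨hs0, hst⟩ := hs
    have hbt : s / t < 1 := (div_lt_one ht).mpr hst
    have hcc := M.concave.2 (self_mem_Ici) (ht.le : t ∈ Ici 0) ht.ne
      (show (0:ℝ) < 1 - s/t by linarith) (show (0:ℝ) < s/t by positivity) (by ring)
    rw [smul_eq_mul, smul_eq_mul, smul_eq_mul, smul_eq_mul, M.m_zero] at hcc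
    have h1 : s / t * M.m t < M.m ((1 - s/t) * 0 + s/t * t) := by linarith
    have h2 : (1 - s/t) * 0 + s/t * t = s := by field_simp; ring
    rw [h2] at h1
    rw [div_le_div_iff₀ ht hs0]
    have h3 : s / t * M.m t * t = s * M.m t := by field_simp
    nlinarith [mul_lt_mul_of_pos_right h1 ht]
  have hle : M.m t / t ≤ M.β := by
    refine ge_of_tendsto M.β_lim ?_
    filter_upwards [Ioo_mem_nhdsGT_of_mem (Set.mem_Ico.mpr ⟨le_refl 0, ht⟩)] with s hs
    exact key s hs
  calc M.m t = M.m t / t * t := by field_simp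
  _ ≤ M.β * t := by nlinarith [ht.le]

section gsec
variable {M} {g : ℝ → ℝ}
  (hβ : 0 < M.β)
  (hg0 : g (1 / M.β) = 0)
  (hgmono : StrictMonoOn g (Ici (1 / M.β)))
  (hgcont : ContinuousOn g (Ici (1 / M.β)))
  (hginv : ∀ t > (0:ℝ), g (t / M.m t) = t)

include hβ hg0 hgmono hginv in
lemma g_key : ∀ y > 1 / M.β, 0 < g y ∧ M.m (g y) = g y / y := by
  intro y hy
  have hy' : y ∈ Ici (1 / M.β) := le_of_lt hy
  have hgy : 0 < g y := by
    rw [← hg0]; exact hgmono self_mem_Ici hy' hy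
  refine ⟨hgy, ?_⟩
  set t := g y with htdef
  have hmt : 0 < M.m t := m_pos M t hgy
  have hrat : M.m t ≤ M.β * t := m_ratio_le M t hgy
  have hmem : t / M.m t ∈ Ici (1 / M.β) := by
    rw [mem_Ici, div_le_div_iff₀ hβ hmt]
    nlinarith
  have := hginv t hgy
  have heq : t / M.m t = y := hgmono.injOn hmem hy' (by rw [this])
  have hy0 : 0 < y := lt_trans (by positivity) hy
  field_simp at heq ⊢
  nlinarith [heq]
end gsec

-- ψ
def psi (M : MeetingFunction) (g : ℝ → ℝ) : ℝ → ℝ := fun y => g (max y (1 / M.β))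

section psisec
variable {M} {g : ℝ → ℝ}
  (hβ : 0 < M.β)
  (hg0 : g (1 / M.β) = 0)
  (hgmono : StrictMonoOn g (Ici (1 / M.β)))
  (hgcont : ContinuousOn g (Ici (1 / M.β)))

include hgcont in
lemma psi_cont : Continuous (psi M g) :=
  hgcont.comp_continuous (continuous_id.max continuous_const) (fun x => mem_Ici.mpr (le_max_right _ _))

include hg0 in
lemma psi_of_le {y : ℝ} (h : y ≤ 1 / M.β) : psi M g y = 0 := by
  rw [psi, max_eq_right h, hg0]

lemma psi_of_gt {y : ℝ} (h : 1 / M.β < y) : psi M g y = g y := by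
  rw [psi, max_eq_left h.le]

include hg0 hgmono in
lemma psi_nonneg (y : ℝ) : 0 ≤ psi M g y := by
  rcases le_or_gt y (1 / M.β) with h | h
  · rw [psi_of_le hg0 h]
  · rw [psi_of_gt h, ← hg0]
    exact (hgmono self_mem_Ici h.le h).le

include hg0 hgmono in
lemma psi_pos {y : ℝ} (h : 1 / M.β < y) : 0 < psi M g y := by
  rw [psi_of_gt h, ← hg0]; exact hgmono self_mem_Ici h.le h

include hgmono in
lemma psi_mono : Monotone (psi M g) := by
  intro y1 y2 h
  exact hgmono.monotoneOn (mem_Ici.mpr (le_max_right _ _)) (mem_Ici.mpr (le_max_right _ _))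
    (max_le_max h (le_refl _))

include hgmono in
lemma psi_strict {y1 y2 : ℝ} (h : y1 < y2) (h2 : 1 / M.β < y2) :
    psi M g y1 < psi M g y2 := by
  refine hgmono (mem_Ici.mpr (le_max_right _ _)) (mem_Ici.mpr (le_max_right _ _)) ?_
  rw [max_eq_left h2.le]
  exact max_lt h h2

-- m₀
include hg0 hgmono in
lemma psi_pos_iff (y : ℝ) : 0 < psi M g y ↔ 1 / M.β < y := by
  constructor
  · intro h
    by_contra hc
    rw [psi_of_le hg0 (not_lt.mp hc)] at h
    exact lt_irrefl 0 h
  · exact fun h => psi_pos hg0 hgmono h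
end psisec

def m0 (M : MeetingFunction) : ℝ → ℝ := fun t => M.m (max t 0)

lemma m0_cont : Continuous (m0 M) :=
  (m_contOn M).comp_continuous (continuous_id.max continuous_const) (fun x => mem_Ici.mpr (le_max_right _ _))

lemma m0_eq {t : ℝ} (h : 0 ≤ t) : m0 M t = M.m t := by rw [m0, max_eq_left h]

lemma m0_nonneg (t : ℝ) : 0 ≤ m0 M t := m_nonneg M _ (le_max_right _ _)

lemma m0_le_one (t : ℝ) : m0 M t ≤ 1 := m_le_one M _ (le_max_right _ _)

lemma m0_mono : Monotone (m0 M) := fun a b h =>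
  M.mono.monotoneOn (mem_Ici.mpr (le_max_right _ _)) (mem_Ici.mpr (le_max_right _ _)) (max_le_max h (le_refl _))

lemma m0_strict {a b : ℝ} (ha : 0 ≤ a) (h : a < b) : m0 M a < m0 M b := by
  rw [m0_eq M ha, m0_eq M (ha.trans h.le)]
  exact M.mono ha (ha.trans h.le) h

-- ## Auxiliary lemmas about `wOf` and `Eθ`

lemma integrable_of_bdd {α : Type*} [MeasurableSpace α] {μ : Measure α} [IsFiniteMeasure μ]
    {f : α → ℝ} (hf : AEStronglyMeasurable f μ) {C : ℝ} (h : ∀ x, |f x| ≤ C) :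
    Integrable f μ :=
  Integrable.mono' (integrable_const C) hf (ae_of_all _ fun x => by
    rw [Real.norm_eq_abs]; exact h x)

lemma lamθ_mem {lam : Θ → ℝ} (hlam : ∀ θ, lam θ ∈ Icc (0:ℝ) 1) (θ : Θ) :
    lam θ * (θ : ℝ) ∈ Icc (0:ℝ) 1 := by
  have h1 := (hlam θ).1
  have h2 := (hlam θ).2
  have h3 := θ.2.1
  have h4 := θ.2.2
  constructor <;> nlinarith

lemma meas_lamθ {lam : Θ → ℝ} (hlam_meas : Measurable lam) :
    Measurable fun θ : Θ => lam θ * (θ : ℝ) :=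
  hlam_meas.mul measurable_subtype_coe

lemma wOf_meas {lam : Θ → ℝ} (hlam_meas : Measurable lam) (hlam : ∀ θ, lam θ ∈ Icc (0:ℝ) 1) :
    Measurable (wOf lam) :=
  meas_int (meas_lamθ hlam_meas) (fun θ => (lamθ_mem hlam θ).1)

lemma Eθ_meas : Measurable Eθ :=
  meas_int measurable_subtype_coe (fun θ => θ.2.1)

lemma wOf_nonneg {lam : Θ → ℝ} (hlam : ∀ θ, lam θ ∈ Icc (0:ℝ) 1) (ν : PM) :
    0 ≤ wOf lam ν :=
  integral_nonneg (fun θ => (lamθ_mem hlam θ).1)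

lemma int_lamθ {lam : Θ → ℝ} (hlam_meas : Measurable lam) (hlam : ∀ θ, lam θ ∈ Icc (0:ℝ) 1)
    (ν : PM) : Integrable (fun θ : Θ => lam θ * (θ : ℝ)) (ν : Measure Θ) :=
  integrable_of_bdd (meas_lamθ hlam_meas).aestronglyMeasurable (C := 1)
    (fun θ => by rw [abs_of_nonneg (lamθ_mem hlam θ).1]; exact (lamθ_mem hlam θ).2)

lemma int_θ (ν : PM) : Integrable (fun θ : Θ => (θ : ℝ)) (ν : Measure Θ) :=
  integrable_of_bdd measurable_subtype_coe.aestronglyMeasurable (C := 1)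
    (fun θ => by rw [abs_of_nonneg θ.2.1]; exact θ.2.2)

lemma wOf_le_one {lam : Θ → ℝ} (hlam_meas : Measurable lam) (hlam : ∀ θ, lam θ ∈ Icc (0:ℝ) 1)
    (ν : PM) : wOf lam ν ≤ 1 := by
  have : wOf lam ν ≤ ∫ _θ, (1:ℝ) ∂(ν : Measure Θ) :=
    integral_mono (int_lamθ hlam_meas hlam ν) (integrable_const 1)
      (fun θ => (lamθ_mem hlam θ).2)
  simpa using this

lemma Eθ_nonneg (ν : PM) : 0 ≤ Eθ ν := integral_nonneg (fun θ => θ.2.1)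

lemma Eθ_le_one (ν : PM) : Eθ ν ≤ 1 := by
  have : Eθ ν ≤ ∫ _θ, (1:ℝ) ∂(ν : Measure Θ) :=
    integral_mono (int_θ ν) (integrable_const 1) (fun θ => θ.2.2)
  simpa using this

lemma wOf_le_Eθ {lam : Θ → ℝ} (hlam_meas : Measurable lam) (hlam : ∀ θ, lam θ ∈ Icc (0:ℝ) 1)
    (ν : PM) : wOf lam ν ≤ Eθ ν :=
  integral_mono (int_lamθ hlam_meas hlam ν) (int_θ ν)
    (fun θ => by nlinarith [(hlam θ).1, (hlam θ).2, θ.2.1])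

/-- if `w(ν) = 0` then `ν {λθ > 0} = 0`. -/
lemma wOf_eq_zero {lam : Θ → ℝ} (hlam_meas : Measurable lam) (hlam : ∀ θ, lam θ ∈ Icc (0:ℝ) 1)
    (ν : PM) (h : wOf lam ν = 0) : (ν : Measure Θ) {θ : Θ | 0 < lam θ * (θ : ℝ)} = 0 := by
  have hae : (fun θ : Θ => lam θ * (θ : ℝ)) =ᵐ[(ν : Measure Θ)] 0 :=
    (integral_eq_zero_iff_of_nonneg (fun θ => (lamθ_mem hlam θ).1)
      (int_lamθ hlam_meas hlam ν)).mp h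
  rw [Filter.EventuallyEq, ae_iff] at hae
  refine measure_mono_null ?_ hae
  intro θ hθ
  simp only [mem_setOf_eq, Pi.zero_apply] at hθ ⊢
  exact ne_of_gt hθ

-- ## Segmentation measure lemmas

lemma segMeasure_prob (μ : Measure Θ) [IsProbabilityMeasure μ] (σ : Kernel Θ PM)
    [IsMarkovKernel σ] : IsProbabilityMeasure (segMeasure μ σ) := by
  constructor
  rw [segMeasure, Measure.bind_apply MeasurableSet.univ σ.measurable.aemeasurable]
  simp

lemma bayes_univ {μ : Measure Θ} [IsProbabilityMeasure μ] {σ : Kernel Θ PM}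
    (hσ : σ ∈ Seg μ) {A : Set Θ} (hA : MeasurableSet A) :
    (μ A).toReal = ∫ ν, ((ν : Measure Θ) A).toReal ∂(segMeasure μ σ) := by
  obtain ⟨hm, hb⟩ := hσ
  have := hb A hA univ MeasurableSet.univ
  rw [Measure.restrict_univ] at this
  rw [← this]
  have : ∀ θ : Θ, ((σ θ) univ).toReal = (1:ℝ) := by
    intro θ
    haveI := hm.isProbabilityMeasure θ
    simp
  simp only [this]
  rw [setIntegral_const]
  simp
  rfl

lemma muA_pos {μ : Measure Θ} (hac : μ ≪ (volume : Measure Θ)) {lam : Θ → ℝ}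
    (hlam : ∀ θ, lam θ ∈ Icc (0:ℝ) 1) (hlam_pos : 0 < μ {θ | 0 < lam θ}) :
    0 < μ {θ : Θ | 0 < lam θ * (θ : ℝ)} := by
  have hz : μ {θ : Θ | (θ : ℝ) = 0} = 0 := by
    apply hac
    have : {θ : Θ | (θ : ℝ) = 0} ⊆ {(⟨0, by norm_num⟩ : Θ)} := by
      intro θ hθ
      simp only [mem_setOf_eq] at hθ
      exact Set.mem_singleton_iff.mpr (Subtype.ext hθ)
    refine measure_mono_null this ?_
    rw [unitInterval.volume_def,
      (MeasurableEmbedding.subtype_coe measurableSet_Icc).comap_apply]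
    simp
  have hsub : {θ : Θ | 0 < lam θ} ⊆ {θ : Θ | 0 < lam θ * (θ : ℝ)} ∪ {θ : Θ | (θ : ℝ) = 0} := by
    intro θ hθ
    simp only [mem_setOf_eq, mem_union] at hθ ⊢
    rcases eq_or_lt_of_le θ.2.1 with h | h
    · exact Or.inr h.symm
    · exact Or.inl (mul_pos hθ h)
  by_contra hc
  push_neg at hc
  have h0 : μ {θ : Θ | 0 < lam θ * (θ : ℝ)} = 0 := le_antisymm hc (zero_le)
  have := (measure_mono (μ := μ) hsub).trans (measure_union_le _ _)
  rw [h0, hz, add_zero] at this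
  exact absurd (le_antisymm this (zero_le)) (ne_of_gt hlam_pos)

lemma rho_w_pos {μ : Measure Θ} [IsProbabilityMeasure μ] (hac : μ ≪ (volume : Measure Θ))
    {lam : Θ → ℝ} (hlam_meas : Measurable lam) (hlam : ∀ θ, lam θ ∈ Icc (0:ℝ) 1)
    (hlam_pos : 0 < μ {θ | 0 < lam θ}) {σ : Kernel Θ PM} (hσ : σ ∈ Seg μ) :
    0 < (segMeasure μ σ) {ν | 0 < wOf lam ν} := by
  set ρ := segMeasure μ σ
  set A : Set Θ := {θ : Θ | 0 < lam θ * (θ : ℝ)} with hA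
  have hAm : MeasurableSet A := measurableSet_lt measurable_const (meas_lamθ hlam_meas)
  by_contra hc
  push_neg at hc
  have h0 : ρ {ν | 0 < wOf lam ν} = 0 := le_antisymm hc (zero_le)
  have hae : ∀ᵐ ν ∂ρ, wOf lam ν = 0 := by
    rw [ae_iff]
    refine measure_mono_null ?_ h0
    intro ν hν
    simp only [mem_setOf_eq] at hν ⊢
    exact lt_of_le_of_ne (wOf_nonneg hlam ν) (Ne.symm hν)
  have hae2 : ∀ᵐ (ν : PM) ∂ρ, ((ν : Measure Θ) A).toReal = 0 := by
    filter_upwards [hae] with ν hν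
    rw [wOf_eq_zero hlam_meas hlam ν hν]
    simp
  have hint : ∫ ν, ((ν : Measure Θ) A).toReal ∂ρ = 0 := by
    rw [integral_congr_ae hae2, integral_zero]
  have := bayes_univ hσ hAm
  rw [hint] at this
  have hpos := muA_pos hac hlam hlam_pos
  rw [← hA] at hpos
  exact absurd this (ne_of_gt (ENNReal.toReal_pos (ne_of_gt hpos) (measure_ne_top _ _)))

lemma exists_c {μ : Measure Θ} [IsProbabilityMeasure μ] (hac : μ ≪ (volume : Measure Θ))
    {lam : Θ → ℝ} (hlam_meas : Measurable lam) (hlam : ∀ θ, lam θ ∈ Icc (0:ℝ) 1)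
    (hlam_pos : 0 < μ {θ | 0 < lam θ}) {σ : Kernel Θ PM} (hσ : σ ∈ Seg μ) :
    ∃ c : ℝ, 0 < c ∧ 0 < (segMeasure μ σ) {ν | c ≤ wOf lam ν} := by
  set ρ := segMeasure μ σ
  by_contra hc
  push_neg at hc
  have h0 : ∀ n : ℕ, ρ {ν | 1/(n+1 : ℝ) ≤ wOf lam ν} = 0 := fun n =>
    le_antisymm (hc (1/(n+1:ℝ)) (by positivity)) (zero_le)
  have hun : {ν : PM | 0 < wOf lam ν} ⊆ ⋃ n : ℕ, {ν | 1/(n+1 : ℝ) ≤ wOf lam ν} := by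
    intro ν hν
    simp only [mem_setOf_eq] at hν
    obtain ⟨n, hn⟩ := exists_nat_one_div_lt hν
    exact Set.mem_iUnion.mpr ⟨n, le_of_lt hn⟩
  have := (measure_mono (μ := ρ) hun).trans (measure_iUnion_le _)
  simp only [h0, tsum_zero] at this
  exact absurd (le_antisymm this (zero_le))
    (ne_of_gt (rho_w_pos hac hlam_meas hlam hlam_pos hσ))

-- ## Pointwise integrand identities

section pointwise
variable {M : MeetingFunction} {g : ℝ → ℝ} {lam : Θ → ℝ}
  (hβ : 0 < M.β)
  (hg0 : g (1 / M.β) = 0)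
  (hgmono : StrictMonoOn g (Ici (1 / M.β)))
  (hginv : ∀ t > (0:ℝ), g (t / M.m t) = t)
  (hlam : ∀ θ, lam θ ∈ Icc (0:ℝ) 1)

include hβ hg0 hgmono hlam in
lemma phi_eq {u : ℝ} (hu : 0 < u) (ν : PM) :
    phi M g lam ν u = psi M g (wOf lam ν / u) := by
  set w := wOf lam ν with hw
  rw [phi]
  by_cases h : M.β * w > u
  · rw [if_pos h, psi_of_gt]
    rw [div_lt_div_iff₀ hβ hu]
    nlinarith
  · rw [if_neg h, psi_of_le hg0]
    push_neg at h
    rw [div_le_div_iff₀ hu hβ]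
    nlinarith

include hβ hg0 hgmono hlam in
lemma mphi_eq {u : ℝ} (hu : 0 < u) (ν : PM) :
    M.m (phi M g lam ν u) = m0 M (psi M g (wOf lam ν / u)) := by
  rw [phi_eq hβ hg0 hgmono hlam hu ν, m0_eq M (psi_nonneg hg0 hgmono _)]

include hβ hg0 hgmono hginv hlam in
lemma fixpt_form {u : ℝ} (hu : 0 < u) (ν : PM) :
    M.m (phi M g lam ν u) * wOf lam ν = u * psi M g (wOf lam ν / u) := by
  rw [phi_eq hβ hg0 hgmono hlam hu ν]
  set w := wOf lam ν with hw
  rcases le_or_gt (w / u) (1 / M.β) with h | h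
  · rw [psi_of_le hg0 h, M.m_zero, zero_mul, mul_zero]
  · have hw0 : 0 < w := by
      have : 0 < w / u := lt_trans (by positivity) h
      exact (div_pos_iff_of_pos_right hu).mp this
    rw [psi_of_gt h]
    obtain ⟨hgp, hmg⟩ := g_key hβ hg0 hgmono hginv (w/u) h
    rw [hmg]
    field_simp
end pointwise

-- ## Integral-level lemmas

section intlevel
variable {M : MeetingFunction} {g : ℝ → ℝ} {lam : Θ → ℝ}
  (hβ : 0 < M.β)
  (hg0 : g (1 / M.β) = 0)
  (hgmono : StrictMonoOn g (Ici (1 / M.β)))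
  (hgcont : ContinuousOn g (Ici (1 / M.β)))
  (hlam_meas : Measurable lam) (hlam : ∀ θ, lam θ ∈ Icc (0:ℝ) 1)
  (ρ : Measure PM) [IsProbabilityMeasure ρ]

include hgcont hlam_meas hlam in
lemma psi_comp_meas (u : ℝ) : Measurable fun ν : PM => psi M g (wOf lam ν / u) :=
  (psi_cont hgcont).measurable.comp ((wOf_meas hlam_meas hlam).div_const u)

include hg0 hgmono hgcont hlam_meas hlam in
lemma psi_comp_int {u : ℝ} (hu : 0 < u) :
    Integrable (fun ν : PM => psi M g (wOf lam ν / u)) ρ := by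
  refine integrable_of_bdd (psi_comp_meas hgcont hlam_meas hlam u).aestronglyMeasurable
    (C := psi M g (1/u)) (fun ν => ?_)
  rw [abs_of_nonneg (psi_nonneg hg0 hgmono _)]
  refine psi_mono hgmono ?_
  exact div_le_div_of_nonneg_right (wOf_le_one hlam_meas hlam ν) hu.le
end intlevel

section intlevel2
variable {M : MeetingFunction} {g : ℝ → ℝ} {lam : Θ → ℝ}
  (hβ : 0 < M.β)
  (hg0 : g (1 / M.β) = 0)
  (hgmono : StrictMonoOn g (Ici (1 / M.β)))
  (hgcont : ContinuousOn g (Ici (1 / M.β)))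
  (hginv : ∀ t > (0:ℝ), g (t / M.m t) = t)
  (hlam_meas : Measurable lam) (hlam : ∀ θ, lam θ ∈ Icc (0:ℝ) 1)
  (ρ : Measure PM) [IsProbabilityMeasure ρ]

/-- the U-integrand. -/
def UI (M : MeetingFunction) (g : ℝ → ℝ) (lam : Θ → ℝ) (u : ℝ) (ν : PM) : ℝ :=
  m0 M (psi M g (wOf lam ν / u)) * wOf lam ν

/-- the S-integrand. -/
def SI (M : MeetingFunction) (g : ℝ → ℝ) (lam : Θ → ℝ) (u : ℝ) (ν : PM) : ℝ :=
  m0 M (psi M g (wOf lam ν / u)) * Eθ ν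

include hgcont hlam_meas hlam in
lemma UI_meas (u : ℝ) : Measurable (UI M g lam u) :=
  ((m0_cont M).measurable.comp (psi_comp_meas hgcont hlam_meas hlam u)).mul
    (wOf_meas hlam_meas hlam)

include hgcont hlam_meas hlam in
lemma SI_meas (u : ℝ) : Measurable (SI M g lam u) :=
  ((m0_cont M).measurable.comp (psi_comp_meas hgcont hlam_meas hlam u)).mul Eθ_meas

include hlam_meas hlam in
lemma UI_mem (u : ℝ) (ν : PM) : UI M g lam u ν ∈ Icc (0:ℝ) 1 := by
  constructor
  · exact mul_nonneg (m0_nonneg M _) (wOf_nonneg hlam ν)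
  · calc UI M g lam u ν ≤ 1 * 1 := by
          apply mul_le_mul (m0_le_one M _) (wOf_le_one hlam_meas hlam ν)
            (wOf_nonneg hlam ν) zero_le_one
        _ = 1 := by ring

include hlam in
lemma SI_mem (u : ℝ) (ν : PM) : SI M g lam u ν ∈ Icc (0:ℝ) 1 := by
  constructor
  · exact mul_nonneg (m0_nonneg M _) (Eθ_nonneg ν)
  · calc SI M g lam u ν ≤ 1 * 1 := by
          apply mul_le_mul (m0_le_one M _) (Eθ_le_one ν) (Eθ_nonneg ν) zero_le_one
        _ = 1 := by ring

include hgcont hlam_meas hlam in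
lemma UI_int (u : ℝ) : Integrable (UI M g lam u) ρ :=
  integrable_of_bdd (UI_meas hgcont hlam_meas hlam u).aestronglyMeasurable (C := 1)
    (fun ν => by rw [abs_of_nonneg (UI_mem hlam_meas hlam u ν).1]
                 exact (UI_mem hlam_meas hlam u ν).2)

include hgcont hlam_meas hlam in
lemma SI_int (u : ℝ) : Integrable (SI M g lam u) ρ :=
  integrable_of_bdd (SI_meas hgcont hlam_meas hlam u).aestronglyMeasurable (C := 1)
    (fun ν => by rw [abs_of_nonneg (SI_mem hlam u ν).1]; exact (SI_mem hlam u ν).2)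

include hβ hg0 hgmono hlam_meas hlam in
lemma Uval_eq {μ : Measure Θ} {σ : Kernel Θ PM} {k : ℝ} {u : ℝ} (hu : 0 < u) :
    Uval M g k lam μ σ u = k * ∫ ν, UI M g lam u ν ∂(segMeasure μ σ) := by
  rw [Uval]
  congr 1
  refine integral_congr_ae (ae_of_all _ (fun ν => ?_))
  simp only [UI]
  rw [mphi_eq hβ hg0 hgmono hlam hu ν]

include hβ hg0 hgmono hlam_meas hlam in
lemma Sval_eq {μ : Measure Θ} {σ : Kernel Θ PM} {k : ℝ} {u : ℝ} (hu : 0 < u) :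
    Sval M g k lam μ σ u = k * ∫ ν, SI M g lam u ν ∂(segMeasure μ σ) := by
  rw [Sval]
  congr 1
  refine integral_congr_ae (ae_of_all _ (fun ν => ?_))
  simp only [SI]
  rw [mphi_eq hβ hg0 hgmono hlam hu ν]

include hβ hg0 hgmono hginv hlam_meas hlam in
lemma UI_int_eq_J {u : ℝ} (hu : 0 < u) :
    ∫ ν, UI M g lam u ν ∂ρ = u * ∫ ν, psi M g (wOf lam ν / u) ∂ρ := by
  rw [← integral_const_mul]
  refine integral_congr_ae (ae_of_all _ (fun ν => ?_))
  simp only [UI]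
  rw [← mphi_eq hβ hg0 hgmono hlam hu ν, ← phi_eq hβ hg0 hgmono hlam hu ν,
    fixpt_form hβ hg0 hgmono hginv hlam hu ν, phi_eq hβ hg0 hgmono hlam hu ν]

include hβ hg0 hgmono hgcont hlam_meas hlam in
lemma U_le_S (k : ℝ) (hk : 0 ≤ k) (u : ℝ) :
    k * ∫ ν, UI M g lam u ν ∂ρ ≤ k * ∫ ν, SI M g lam u ν ∂ρ := by
  refine mul_le_mul_of_nonneg_left ?_ hk
  refine integral_mono (UI_int hgcont hlam_meas hlam ρ u) (SI_int hgcont hlam_meas hlam ρ u)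
    (fun ν => ?_)
  exact mul_le_mul_of_nonneg_left (wOf_le_Eθ hlam_meas hlam ν) (m0_nonneg M _)

include hgcont hlam_meas hlam in
lemma U_contAt (k : ℝ) {u₀ : ℝ} (hu₀ : 0 < u₀) :
    ContinuousAt (fun u => k * ∫ ν, UI M g lam u ν ∂ρ) u₀ := by
  refine ContinuousAt.mul continuousAt_const ?_
  refine continuousAt_of_dominated (F := fun u ν => UI M g lam u ν)
    (bound := fun _ => 1) ?_ ?_ ?_ ?_
  · exact Eventually.of_forall (fun u =>
      (UI_meas hgcont hlam_meas hlam u).aestronglyMeasurable)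
  · refine Eventually.of_forall (fun u => ae_of_all _ (fun ν => ?_))
    rw [Real.norm_eq_abs, abs_of_nonneg (UI_mem hlam_meas hlam u ν).1]
    exact (UI_mem hlam_meas hlam u ν).2
  · exact integrable_const 1
  · refine ae_of_all _ (fun ν => ?_)
    have : ContinuousAt (fun u => wOf lam ν / u) u₀ :=
      ContinuousAt.div continuousAt_const continuousAt_id (ne_of_gt hu₀)
    exact (ContinuousAt.comp ((m0_cont M).continuousAt)
      ((psi_cont hgcont).continuousAt.comp this)).mul continuousAt_const

include hg0 hgmono hgcont hlam_meas hlam in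
lemma pos_set_of_J {u : ℝ} (hu : 0 < u) (hJ : 0 < ∫ ν, psi M g (wOf lam ν / u) ∂ρ) :
    0 < ρ {ν : PM | 0 < psi M g (wOf lam ν / u)} := by
  rw [integral_pos_iff_support_of_nonneg_ae
    (ae_of_all _ (fun ν => psi_nonneg hg0 hgmono _))
    (psi_comp_int hg0 hgmono hgcont hlam_meas hlam ρ hu)] at hJ
  refine lt_of_lt_of_le hJ (measure_mono ?_)
  intro ν hν
  simp only [Function.mem_support] at hν
  simp only [mem_setOf_eq]
  exact lt_of_le_of_ne (psi_nonneg hg0 hgmono _) (Ne.symm hν)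

include hβ hg0 hgmono hgcont hlam_meas hlam in
lemma J_strict_anti {a b : ℝ} (ha : 0 < a) (hab : a < b)
    (hpos : 0 < ρ {ν : PM | 0 < psi M g (wOf lam ν / b)}) :
    ∫ ν, psi M g (wOf lam ν / b) ∂ρ < ∫ ν, psi M g (wOf lam ν / a) ∂ρ := by
  have hb : 0 < b := ha.trans hab
  have hmono : ∀ ν : PM, psi M g (wOf lam ν / b) ≤ psi M g (wOf lam ν / a) :=
    fun ν => psi_mono hgmono
      (div_le_div_of_nonneg_left (wOf_nonneg hlam ν) ha hab.le)
  have hdiffpos : ∀ ν ∈ {ν : PM | 0 < psi M g (wOf lam ν / b)},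
      0 < psi M g (wOf lam ν / a) - psi M g (wOf lam ν / b) := by
    intro ν hν
    simp only [mem_setOf_eq] at hν
    have h1 : 1 / M.β < wOf lam ν / b := (psi_pos_iff hg0 hgmono _).mp hν
    have hw : 0 < wOf lam ν := by
      have : 0 < wOf lam ν / b := lt_trans (by positivity) h1
      exact (div_pos_iff_of_pos_right hb).mp this
    have hlt : wOf lam ν / b < wOf lam ν / a := div_lt_div_of_pos_left hw ha hab
    have := psi_strict hgmono hlt (h1.trans hlt)
    linarith
  have hint : 0 < ∫ ν, (psi M g (wOf lam ν / a) - psi M g (wOf lam ν / b)) ∂ρ := by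
    refine (integral_pos_iff_support_of_nonneg_ae
      (ae_of_all _ (fun ν => by simpa using (hmono ν)))
      ((psi_comp_int hg0 hgmono hgcont hlam_meas hlam ρ ha).sub
        (psi_comp_int hg0 hgmono hgcont hlam_meas hlam ρ hb))).mpr ?_
    refine lt_of_lt_of_le hpos (measure_mono ?_)
    intro ν hν
    exact Function.mem_support.mpr (ne_of_gt (hdiffpos ν hν))
  rw [integral_sub (psi_comp_int hg0 hgmono hgcont hlam_meas hlam ρ ha)
    (psi_comp_int hg0 hgmono hgcont hlam_meas hlam ρ hb)] at hint
  linarith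

include hβ hg0 hgmono hgcont hlam_meas hlam in
lemma S_strict_anti {a b : ℝ} (ha : 0 < a) (hab : a < b)
    (hpos : 0 < ρ {ν : PM | 0 < psi M g (wOf lam ν / a)}) :
    ∫ ν, SI M g lam b ν ∂ρ < ∫ ν, SI M g lam a ν ∂ρ := by
  have hb : 0 < b := ha.trans hab
  have hmono : ∀ ν : PM, SI M g lam b ν ≤ SI M g lam a ν := by
    intro ν
    refine mul_le_mul_of_nonneg_right (m0_mono M (psi_mono hgmono ?_)) (Eθ_nonneg ν)
    exact div_le_div_of_nonneg_left (wOf_nonneg hlam ν) ha hab.le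
  have hdiffpos : ∀ ν ∈ {ν : PM | 0 < psi M g (wOf lam ν / a)},
      0 < SI M g lam a ν - SI M g lam b ν := by
    intro ν hν
    simp only [mem_setOf_eq] at hν
    have h1 : 1 / M.β < wOf lam ν / a := (psi_pos_iff hg0 hgmono _).mp hν
    have hw : 0 < wOf lam ν := by
      have : 0 < wOf lam ν / a := lt_trans (by positivity) h1
      exact (div_pos_iff_of_pos_right ha).mp this
    have hlt : wOf lam ν / b < wOf lam ν / a := div_lt_div_of_pos_left hw ha hab
    have hpsilt : psi M g (wOf lam ν / b) < psi M g (wOf lam ν / a) :=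
      psi_strict hgmono hlt h1
    have hm0lt : m0 M (psi M g (wOf lam ν / b)) < m0 M (psi M g (wOf lam ν / a)) :=
      m0_strict M (psi_nonneg hg0 hgmono _) hpsilt
    have hEθ : 0 < Eθ ν := lt_of_lt_of_le hw (wOf_le_Eθ hlam_meas hlam ν)
    simp only [SI]
    nlinarith
  have hint : 0 < ∫ ν, (SI M g lam a ν - SI M g lam b ν) ∂ρ := by
    refine (integral_pos_iff_support_of_nonneg_ae
      (ae_of_all _ (fun ν => by simpa using (hmono ν)))
      ((SI_int hgcont hlam_meas hlam ρ a).sub (SI_int hgcont hlam_meas hlam ρ b))).mpr ?_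
    refine lt_of_lt_of_le hpos (measure_mono ?_)
    intro ν hν
    exact Function.mem_support.mpr (ne_of_gt (hdiffpos ν hν))
  rw [integral_sub (SI_int hgcont hlam_meas hlam ρ a) (SI_int hgcont hlam_meas hlam ρ b)] at hint
  linarith

include hβ hg0 hgmono hgcont hlam_meas hlam in
lemma J_lower {c u : ℝ} (hc : 0 < c) (hu : 0 < u) (huc : u < M.β * c)
    (hS : MeasurableSet {ν : PM | c ≤ wOf lam ν}) :
    g (c/u) * (ρ {ν : PM | c ≤ wOf lam ν}).toReal ≤ ∫ ν, psi M g (wOf lam ν / u) ∂ρ := by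
  have hcu : 1 / M.β < c / u := by
    rw [div_lt_div_iff₀ hβ hu]; nlinarith
  have hind : ∀ ν : PM, {ν : PM | c ≤ wOf lam ν}.indicator (fun _ => g (c/u)) ν
      ≤ psi M g (wOf lam ν / u) := by
    intro ν
    by_cases hν : ν ∈ {ν : PM | c ≤ wOf lam ν}
    · rw [indicator_of_mem hν]
      rw [← psi_of_gt (M := M) (g := g) hcu]
      exact psi_mono hgmono (div_le_div_of_nonneg_right hν hu.le)
    · rw [indicator_of_notMem hν]
      exact psi_nonneg hg0 hgmono _
  have hintind : Integrable ({ν : PM | c ≤ wOf lam ν}.indicator (fun _ => g (c/u))) ρ :=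
    (integrable_const _).indicator hS
  have := integral_mono hintind (psi_comp_int hg0 hgmono hgcont hlam_meas hlam ρ hu) hind
  rwa [integral_indicator_const _ hS, smul_eq_mul, mul_comm] at this
end intlevel2

-- ## small-u, umax, IVT lemmas

section mainlemmas
variable {M : MeetingFunction} {g : ℝ → ℝ} {lam : Θ → ℝ}
  (hβ : 0 < M.β)
  (hg0 : g (1 / M.β) = 0)
  (hgmono : StrictMonoOn g (Ici (1 / M.β)))
  (hgcont : ContinuousOn g (Ici (1 / M.β)))
  (hginv : ∀ t > (0:ℝ), g (t / M.m t) = t)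
  (hgtop : Tendsto g atTop atTop)
  (hlam_meas : Measurable lam) (hlam : ∀ θ, lam θ ∈ Icc (0:ℝ) 1)
  (ρ : Measure PM) [IsProbabilityMeasure ρ]
  {k : ℝ} (hk : 0 < k)

include hβ hg0 hgmono hgcont hginv hgtop hlam_meas hlam hk in
lemma exists_small {b c : ℝ} (hb : 0 < b) (hc : 0 < c)
    (hcp : 0 < ρ {ν : PM | c ≤ wOf lam ν}) :
    ∃ ε : ℝ, 0 < ε ∧ ε < b ∧ ε < k * ∫ ν, UI M g lam ε ν ∂ρ := by
  set p : ℝ := (ρ {ν : PM | c ≤ wOf lam ν}).toReal with hp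
  have hppos : 0 < p := ENNReal.toReal_pos (ne_of_gt hcp) (measure_ne_top _ _)
  -- choose Y such that g y > 1/(k*p) for y ≥ Y
  obtain ⟨Y, hY⟩ := (hgtop.eventually_ge_atTop (1/(k*p) + 1)).exists_forall_of_atTop
  set ε : ℝ := min (min (b/2) (M.β * c/2)) (c / (max Y 1)) with hε
  have hmax1 : (0:ℝ) < max Y 1 := lt_of_lt_of_le zero_lt_one (le_max_right _ _)
  have hεpos : 0 < ε := by
    apply lt_min (lt_min (by linarith) (by positivity))
    positivity
  have hεb : ε < b := lt_of_le_of_lt ((min_le_left _ _).trans (min_le_left _ _)) (by linarith)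
  have hεβc : ε < M.β * c := by
    have h2 : 0 < M.β * c := by positivity
    calc ε ≤ min (b/2) (M.β * c/2) := min_le_left _ _
    _ ≤ M.β * c / 2 := min_le_right _ _
    _ < M.β * c := by linarith
  have hεY : Y ≤ c / ε := by
    have h1 : ε ≤ c / max Y 1 := min_le_right _ _
    have h2 : c / ε ≥ max Y 1 := by
      rw [ge_iff_le, le_div_iff₀ hεpos]
      rw [← le_div_iff₀' hmax1]
      exact h1
    exact (le_max_left Y 1).trans h2
  have hgY : 1/(k*p) + 1 ≤ g (c/ε) := hY _ hεY
  have hJ := J_lower hβ hg0 hgmono hgcont hlam_meas hlam ρ hc hεpos hεβc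
    (measurableSet_le measurable_const (wOf_meas hlam_meas hlam))
  refine ⟨ε, hεpos, hεb, ?_⟩
  rw [UI_int_eq_J hβ hg0 hgmono hginv hlam_meas hlam ρ hεpos]
  have hkp : 0 < k * p := by positivity
  have h3 : 1/(k*p) * (k * p) = 1 := by field_simp
  have h4 : 1 < k * (g (c/ε) * p) := by
    have : (1/(k*p) + 1) * (k*p) ≤ g (c/ε) * (k*p) :=
      mul_le_mul_of_nonneg_right hgY hkp.le
    nlinarith
  have h5 : k * (g (c/ε) * p) ≤ k * ∫ ν, psi M g (wOf lam ν / ε) ∂ρ :=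
    mul_le_mul_of_nonneg_left hJ hk.le
  calc ε = ε * 1 := by ring
  _ < ε * (k * ∫ ν, psi M g (wOf lam ν / ε) ∂ρ) := by
      have := lt_of_lt_of_le h4 h5
      exact (mul_lt_mul_iff_right₀ hεpos).mpr this
  _ = k * (ε * ∫ ν, psi M g (wOf lam ν / ε) ∂ρ) := by ring

include hβ hg0 hlam_meas hlam in
lemma UI_umax_zero (hβ1 : M.β ≤ 1) (ν : PM) : UI M g lam (umax M lam) ν = 0 := by
  have hbdd : BddAbove (range fun θ : Θ => lam θ * (θ : ℝ)) := by
    refine ⟨1, fun x hx => ?_⟩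
    obtain ⟨θ, rfl⟩ := hx
    exact (lamθ_mem hlam θ).2
  have hsup0 : 0 ≤ ⨆ θ : Θ, lam θ * (θ : ℝ) := by
    have : lam ⟨0, by norm_num⟩ * ((⟨0, by norm_num⟩ : Θ) : ℝ) ≤ ⨆ θ : Θ, lam θ * (θ : ℝ) :=
      le_ciSup hbdd _
    simpa using this
  have hw_le : wOf lam ν ≤ ⨆ θ : Θ, lam θ * (θ : ℝ) := by
    have : wOf lam ν ≤ ∫ _θ, (⨆ θ : Θ, lam θ * (θ : ℝ)) ∂(ν : Measure Θ) :=
      integral_mono (int_lamθ hlam_meas hlam ν) (integrable_const _)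
        (fun θ => le_ciSup hbdd θ)
    simpa using this
  have hψ : psi M g (wOf lam ν / umax M lam) = 0 := by
    apply psi_of_le hg0
    rcases eq_or_lt_of_le hsup0 with h | h
    · rw [umax, ← h, mul_zero, div_zero]
      positivity
    · have humax : 0 < umax M lam := by rw [umax]; positivity
      rw [div_le_div_iff₀ humax hβ, umax]
      have := (wOf_nonneg hlam ν)
      nlinarith
  rw [UI, hψ, m0_eq M (le_refl 0), M.m_zero, zero_mul]

-- IVT: find a fixed point of `u ↦ k∫UI u` on `[ε, b]`.
include hgcont hlam_meas hlam in
lemma ivt_fix {ε b : ℝ} (hε : 0 < ε) (hεb : ε < b)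
    (hlow : ε < k * ∫ ν, UI M g lam ε ν ∂ρ) (hhigh : k * ∫ ν, UI M g lam b ν ∂ρ ≤ b) :
    ∃ us : ℝ, ε ≤ us ∧ us ≤ b ∧ k * ∫ ν, UI M g lam us ν ∂ρ = us ∧
      (k * ∫ ν, UI M g lam b ν ∂ρ < b → us < b) := by
  set h : ℝ → ℝ := fun u => k * (∫ ν, UI M g lam u ν ∂ρ) - u with hh
  have hcont : ContinuousOn h (Icc ε b) := by
    intro x hx
    have hx0 : 0 < x := lt_of_lt_of_le hε hx.1
    exact ((U_contAt hgcont hlam_meas hlam ρ k hx0).sub continuousAt_id).continuousWithinAt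
  have h0 : (0:ℝ) ∈ Icc (h b) (h ε) := by
    constructor
    · simp only [hh]; linarith
    · simp only [hh]; linarith
  obtain ⟨us, hus, husz⟩ := intermediate_value_Icc' hεb.le hcont h0
  refine ⟨us, hus.1, hus.2, ?_, ?_⟩
  · simp only [hh] at husz; linarith
  · intro hlt
    rcases eq_or_lt_of_le hus.2 with h | h
    · exfalso
      rw [h] at husz
      simp only [hh] at husz
      linarith
    · exact h
end mainlemmas

-- ## u = 0 case lemmas

section zerocase
variable {M : MeetingFunction} {g : ℝ → ℝ} {lam : Θ → ℝ}
  (hβ : 0 < M.β)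
  (hlam_meas : Measurable lam) (hlam : ∀ θ, lam θ ∈ Icc (0:ℝ) 1)

include hβ hlam in
lemma phi_zero_mul_w (ν : PM) :
    M.m (phi M g lam ν 0) * wOf lam ν = M.m (g 0) * wOf lam ν := by
  rw [phi]
  by_cases h : M.β * wOf lam ν > 0
  · rw [if_pos h, div_zero]
  · rw [if_neg h]
    push_neg at h
    have hw : wOf lam ν = 0 := by
      have := wOf_nonneg hlam ν
      nlinarith
    rw [hw, mul_zero, mul_zero]

include hβ hlam in
lemma phi_zero_mul_E (ν : PM) :
    M.m (phi M g lam ν 0) * Eθ ν = (if 0 < wOf lam ν then M.m (g 0) else 0) * Eθ ν := by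
  rw [phi]
  by_cases h : M.β * wOf lam ν > 0
  · rw [if_pos h, div_zero, if_pos]
    nlinarith [wOf_nonneg hlam ν]
  · rw [if_neg h, M.m_zero, if_neg]
    push_neg at h
    intro hw
    nlinarith

variable (ρ : Measure PM) [IsProbabilityMeasure ρ]

include hlam_meas hlam in
lemma int_w_int : Integrable (wOf lam) ρ :=
  integrable_of_bdd (wOf_meas hlam_meas hlam).aestronglyMeasurable (C := 1)
    (fun ν => by rw [abs_of_nonneg (wOf_nonneg hlam ν)]; exact wOf_le_one hlam_meas hlam ν)

include hlam_meas hlam in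
lemma int_w_pos {c : ℝ} (hc : 0 < c) (hcp : 0 < ρ {ν : PM | c ≤ wOf lam ν}) :
    0 < ∫ ν, wOf lam ν ∂ρ := by
  refine (integral_pos_iff_support_of_nonneg_ae
    (ae_of_all _ (fun ν => wOf_nonneg hlam ν)) (int_w_int hlam_meas hlam ρ)).mpr ?_
  refine lt_of_lt_of_le hcp (measure_mono ?_)
  intro ν hν
  simp only [mem_setOf_eq] at hν
  exact Function.mem_support.mpr (ne_of_gt (lt_of_lt_of_le hc hν))
end zerocase

/-- If a pair `(σ, u)` maximizes `S(σ', u')` over all pairs with `σ'` a market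
segmentation, `u' ∈ [0, ū_max]`, and `U(σ', u') ≤ u'`, then `u > 0`, the constraint binds
(`U(σ, u) = u`), and `u` is the equilibrium payoff `u*_σ` of `σ` (the unique fixed point of
`u' ↦ U(σ, u')` in `(0, ū_max)`). -/
theorem stmt19 (M : MeetingFunction) (g : ℝ → ℝ)
    (hg0 : g (1 / M.β) = 0)
    (hgmono : StrictMonoOn g (Ici (1 / M.β)))
    (hgcont : ContinuousOn g (Ici (1 / M.β)))
    (hgtop : Tendsto g atTop atTop)
    (hginv : ∀ t > (0:ℝ), g (t / M.m t) = t)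
    (k : ℝ) (hk : 0 < k)
    (μ : Measure Θ) [IsProbabilityMeasure μ] (hac : μ ≪ (volume : Measure Θ))
    (lam : Θ → ℝ) (hlam_meas : Measurable lam) (hlam : ∀ θ, lam θ ∈ Icc (0:ℝ) 1)
    (hlam_pos : 0 < μ {θ | 0 < lam θ})
    (σ : Kernel Θ PM) (hσ : σ ∈ Seg μ)
    (u : ℝ) (hu : u ∈ Icc 0 (umax M lam))
    (hcons : Uval M g k lam μ σ u ≤ u)
    (hmax : ∀ σ' ∈ Seg μ, ∀ u' ∈ Icc 0 (umax M lam), Uval M g k lam μ σ' u' ≤ u' →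
      Sval M g k lam μ σ' u' ≤ Sval M g k lam μ σ u) :
    0 < u ∧ Uval M g k lam μ σ u = u ∧
    ∀ u' ∈ Ioo 0 (umax M lam), Uval M g k lam μ σ u' = u' → u' = u := by
  classical
  have hβ : 0 < M.β := M.β_mem.1
  haveI : IsMarkovKernel σ := hσ.1
  haveI hρprob : IsProbabilityMeasure (segMeasure μ σ) := segMeasure_prob μ σ
  obtain ⟨c, hc, hcp⟩ := exists_c hac hlam_meas hlam hlam_pos hσ
  -- a bound on the sup
  have hbdd : BddAbove (range fun θ : Θ => lam θ * (θ : ℝ)) := by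
    refine ⟨1, fun x hx => ?_⟩
    obtain ⟨θ, rfl⟩ := hx
    exact (lamθ_mem hlam θ).2
  have humax : 0 < umax M lam := by
    have hApos := muA_pos hac hlam hlam_pos
    obtain ⟨θ0, hθ0⟩ := nonempty_of_measure_ne_zero (ne_of_gt hApos)
    simp only [mem_setOf_eq] at hθ0
    have : lam θ0 * (θ0 : ℝ) ≤ ⨆ θ : Θ, lam θ * (θ : ℝ) := le_ciSup hbdd θ0
    rw [umax]
    have : 0 < ⨆ θ : Θ, lam θ * (θ : ℝ) := lt_of_lt_of_le hθ0 this
    positivity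
  -- the uniqueness engine
  have key : ∀ a b : ℝ, 0 < a → a < b →
      k * ∫ ν, UI M g lam a ν ∂(segMeasure μ σ) = a →
      k * ∫ ν, UI M g lam b ν ∂(segMeasure μ σ) = b → False := by
    intro a b ha hab hfa hfb
    have hb : 0 < b := ha.trans hab
    have hJ : ∀ x : ℝ, 0 < x → k * ∫ ν, UI M g lam x ν ∂(segMeasure μ σ) = x →
        ∫ ν, psi M g (wOf lam ν / x) ∂(segMeasure μ σ) = 1 / k := by
      intro x hx hfx
      rw [UI_int_eq_J hβ hg0 hgmono hginv hlam_meas hlam _ hx] at hfx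
      set J := ∫ ν, psi M g (wOf lam ν / x) ∂(segMeasure μ σ)
      have h1 : (k * J) * x = 1 * x := by linear_combination hfx
      have h2 : k * J = 1 := mul_right_cancel₀ (ne_of_gt hx) h1
      field_simp
      linarith
    have hJa := hJ a ha hfa
    have hJb := hJ b hb hfb
    have hpos : 0 < (segMeasure μ σ) {ν : PM | 0 < psi M g (wOf lam ν / b)} := by
      refine pos_set_of_J hg0 hgmono hgcont hlam_meas hlam _ hb ?_
      rw [hJb]; positivity
    have := J_strict_anti hβ hg0 hgmono hgcont hlam_meas hlam (segMeasure μ σ) ha hab hpos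
    rw [hJa, hJb] at this
    exact lt_irrefl _ this
  -- Step 1 : 0 < u
  have hu0 : 0 < u := by
    rcases eq_or_lt_of_le hu.1 with h | h
    · exfalso
      -- u = 0
      have hUzero : Uval M g k lam μ σ 0 = k * (M.m (g 0) * ∫ ν, wOf lam ν ∂(segMeasure μ σ)) := by
        rw [Uval]
        have heq : (fun ν : PM => M.m (phi M g lam ν 0) * wOf lam ν)
            = fun ν : PM => M.m (g 0) * wOf lam ν :=
          funext (fun ν => phi_zero_mul_w hβ hlam ν)
        rw [heq, integral_const_mul]
      have hW : 0 < ∫ ν, wOf lam ν ∂(segMeasure μ σ) :=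
        int_w_pos hlam_meas hlam _ hc hcp
      have hcons0 : Uval M g k lam μ σ 0 ≤ 0 := by rw [h]; exact hcons
      have hmg0 : M.m (g 0) ≤ 0 := by
        rw [hUzero] at hcons0
        by_contra hpos
        push_neg at hpos
        nlinarith [mul_pos hk (mul_pos hpos hW)]
      have hS0 : Sval M g k lam μ σ 0 ≤ 0 := by
        rw [Sval]
        have hptwise : ∀ ν : PM, M.m (phi M g lam ν 0) * Eθ ν ≤ 0 := by
          intro ν
          rw [phi_zero_mul_E hβ hlam ν]
          by_cases hw : 0 < wOf lam ν
          · rw [if_pos hw]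
            exact mul_nonpos_of_nonpos_of_nonneg hmg0 (Eθ_nonneg ν)
          · rw [if_neg hw, zero_mul]
        have := integral_nonpos (μ := segMeasure μ σ) (f := fun ν => M.m (phi M g lam ν 0) * Eθ ν)
          hptwise
        nlinarith
      -- find a strictly positive feasible fixed point
      obtain ⟨ε, hε0, hεmax, hεlow⟩ :=
        exists_small hβ hg0 hgmono hgcont hginv hgtop hlam_meas hlam (segMeasure μ σ) hk
          humax hc hcp
      have hhigh : k * ∫ ν, UI M g lam (umax M lam) ν ∂(segMeasure μ σ) ≤ umax M lam := by
        have : ∀ ν : PM, UI M g lam (umax M lam) ν = 0 :=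
          UI_umax_zero hβ hg0 hlam_meas hlam M.β_mem.2
        simp only [this, integral_zero, mul_zero]
        exact humax.le
      obtain ⟨us, husε, husmax, husfix, _⟩ :=
        ivt_fix hgcont hlam_meas hlam (segMeasure μ σ) hε0 hεmax hεlow hhigh
      have hus0 : 0 < us := lt_of_lt_of_le hε0 husε
      have husU : Uval M g k lam μ σ us = us := by
        rw [Uval_eq hβ hg0 hgmono hlam_meas hlam hus0]; exact husfix
      have hfeas := hmax σ hσ us ⟨hus0.le, husmax⟩ (le_of_eq husU)
      have hSus : us ≤ Sval M g k lam μ σ us := by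
        rw [Sval_eq hβ hg0 hgmono hlam_meas hlam hus0]
        calc us = k * ∫ ν, UI M g lam us ν ∂(segMeasure μ σ) := husfix.symm
        _ ≤ _ := U_le_S hβ hg0 hgmono hgcont hlam_meas hlam (segMeasure μ σ) k hk.le us
      rw [← h] at hfeas
      linarith
    · exact h
  -- Step 2 : binding
  have hbind : Uval M g k lam μ σ u = u := by
    by_contra hne
    have hlt : Uval M g k lam μ σ u < u := lt_of_le_of_ne hcons hne
    obtain ⟨ε, hε0, hεu, hεlow⟩ :=
      exists_small hβ hg0 hgmono hgcont hginv hgtop hlam_meas hlam (segMeasure μ σ) hk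
        hu0 hc hcp
    have hUu : Uval M g k lam μ σ u = k * ∫ ν, UI M g lam u ν ∂(segMeasure μ σ) :=
      Uval_eq hβ hg0 hgmono hlam_meas hlam hu0
    obtain ⟨us, husε, husu, husfix, husstrict⟩ :=
      ivt_fix hgcont hlam_meas hlam (segMeasure μ σ) hε0 hεu hεlow (by rw [← hUu]; exact hcons)
    have huslt : us < u := husstrict (by rw [← hUu]; exact hlt)
    have hus0 : 0 < us := lt_of_lt_of_le hε0 husε
    have husU : Uval M g k lam μ σ us = us := by
      rw [Uval_eq hβ hg0 hgmono hlam_meas hlam hus0]; exact husfix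
    have hfeas := hmax σ hσ us ⟨hus0.le, husu.trans hu.2⟩ (le_of_eq husU)
    -- strictness of S
    have hJus : ∫ ν, psi M g (wOf lam ν / us) ∂(segMeasure μ σ) = 1 / k := by
      have hfx := husfix
      rw [UI_int_eq_J hβ hg0 hgmono hginv hlam_meas hlam _ hus0] at hfx
      set J := ∫ ν, psi M g (wOf lam ν / us) ∂(segMeasure μ σ)
      have h1 : (k * J) * us = 1 * us := by linear_combination hfx
      have h2 : k * J = 1 := mul_right_cancel₀ (ne_of_gt hus0) h1
      field_simp
      linarith
    have hpos : 0 < (segMeasure μ σ) {ν : PM | 0 < psi M g (wOf lam ν / us)} := by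
      refine pos_set_of_J hg0 hgmono hgcont hlam_meas hlam _ hus0 ?_
      rw [hJus]; positivity
    have hSlt := S_strict_anti hβ hg0 hgmono hgcont hlam_meas hlam (segMeasure μ σ)
      hus0 huslt hpos
    rw [Sval_eq hβ hg0 hgmono hlam_meas hlam hus0,
      Sval_eq hβ hg0 hgmono hlam_meas hlam hu0] at hfeas
    nlinarith
  refine ⟨hu0, hbind, ?_⟩
  -- Step 3 : uniqueness
  intro u' hu' hfix'
  have hfixU : k * ∫ ν, UI M g lam u ν ∂(segMeasure μ σ) = u := by
    rw [← Uval_eq hβ hg0 hgmono hlam_meas hlam hu0]; exact hbind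
  have hfixU' : k * ∫ ν, UI M g lam u' ν ∂(segMeasure μ σ) = u' := by
    rw [← Uval_eq hβ hg0 hgmono hlam_meas hlam hu'.1]; exact hfix'
  rcases lt_trichotomy u' u with h | h | h
  · exact absurd (key u' u hu'.1 h hfixU' hfixU) (fun x => x)
  · exact h
  · exact absurd (key u u' hu0 h hfixU hfixU') (fun x => x)
end
end
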